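/- arXiv:1204.4297 — 4 statements merged into one kernel-verified Lean document; each statement's English description precedes it below -/
import Mathlib

section
/- Let I and J be proper two-sided ideals of compact operators on an infinite-dimensional Hilbert space H, and assume I is not contained in J. Then the J-dual space J:I = {a ∈ B(H) : ax ∈ J for all x ∈ I} consists of compact operators, i.e. J:I ⊆ K(H). -/
/-!
If `a` is not compact, there are `ε > 0` and an orthonormal sequence `eₙ` such that the vectors
`a eₙ` are pairwise orthogonal of norm at least `ε`: choose each `eₙ` orthogonal to the earlier
`eₘ` and to the `a⋆a eₘ`. Pythagoras then makes `a` bounded below by `ε` on the closed span `M` of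
the `eₙ`. The closed range `N` of a compact operator `x` is separable, so it embeds isometrically
into `M` by some `V`; then `a V` is bounded below, hence has a bounded left inverse `b`, and
`x = b a (V P_N) x`. For `x ∈ I \ J` and `a ∈ J:I` this would put `x` into `J`.
-/

open Filter Topology

noncomputable section

variable {H : Type*} [NormedAddCommGroup H] [InnerProductSpace ℂ H] [CompleteSpace H]

/-- The `n`-th singular value of a compact operator, realized as the `n`-th
approximation number: the distance from `x` to operators of rank at most `n`
(indexed from `0`, so `sv x 0 = ‖x‖` for `x` compact). -/
def sv (x : H →L[ℂ] H) (n : ℕ) : ℝ :=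
  sInf ((fun F : H →L[ℂ] H => ‖x - F‖) ''
    {F | Module.finrank ℂ (LinearMap.range F.toLinearMap) ≤ n})

/-- A (not necessarily closed) two-sided ideal of `B(H)`. -/
structure IsOpIdeal (I : Set (H →L[ℂ] H)) : Prop where
  zero_mem : (0 : H →L[ℂ] H) ∈ I
  add_mem : ∀ {x y : H →L[ℂ] H}, x ∈ I → y ∈ I → x + y ∈ I
  smul_mem : ∀ (α : ℂ) {x : H →L[ℂ] H}, x ∈ I → α • x ∈ I
  mul_mem_left : ∀ (a : H →L[ℂ] H) {x : H →L[ℂ] H}, x ∈ I → a * x ∈ I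
  mul_mem_right : ∀ (a : H →L[ℂ] H) {x : H →L[ℂ] H}, x ∈ I → x * a ∈ I

/-- A rank-one (orthogonal) projection. -/
def IsRankOneProjection (p : H →L[ℂ] H) : Prop :=
  p * p = p ∧ IsSelfAdjoint p ∧ Module.finrank ℂ (LinearMap.range p.toLinearMap) = 1

/-- A symmetric quasi-norm (with modulus of concavity `C`) on a two-sided ideal `I`. -/
structure IsSymmetricQuasiNorm (I : Set (H →L[ℂ] H)) (q : (H →L[ℂ] H) → ℝ) (C : ℝ) :
    Prop where
  one_le : 1 ≤ C
  nonneg : ∀ x ∈ I, 0 ≤ q x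
  eq_zero : ∀ x ∈ I, (q x = 0 ↔ x = 0)
  smul : ∀ (α : ℂ), ∀ x ∈ I, q (α • x) = ‖α‖ * q x
  add_le : ∀ x ∈ I, ∀ y ∈ I, q (x + y) ≤ C * (q x + q y)
  sym : ∀ (a b : H →L[ℂ] H), ∀ x ∈ I, q (a * x * b) ≤ ‖a‖ * q x * ‖b‖
  rank_one : ∀ p ∈ I, IsRankOneProjection p → q p = 1

/-- Completeness of a quasi-norm on a subset of `B(H)`. -/
def QCompleteOn (I : Set (H →L[ℂ] H)) (q : (H →L[ℂ] H) → ℝ) : Prop :=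
  ∀ x : ℕ → (H →L[ℂ] H), (∀ n, x n ∈ I) →
    (∀ ε : ℝ, 0 < ε → ∃ N, ∀ m n, N ≤ m → N ≤ n → q (x m - x n) < ε) →
    ∃ l ∈ I, Tendsto (fun n => q (x n - l)) atTop (𝓝 0)

/-- A symmetric quasi-Banach ideal of compact operators on `H`. -/
structure IsSymQBIdeal (I : Set (H →L[ℂ] H)) (q : (H →L[ℂ] H) → ℝ) (C : ℝ) : Prop where
  ideal : IsOpIdeal I
  compact : ∀ x ∈ I, IsCompactOperator ⇑x
  snorm : IsSymmetricQuasiNorm I q C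
  complete : QCompleteOn I q

end

variable {H : Type*} [NormedAddCommGroup H] [InnerProductSpace ℂ H] [CompleteSpace H]

/-- The `J`-dual space of `I`: all `a ∈ B(H)` with `ax ∈ J` for every `x ∈ I`. -/
def dualIdeal (J I : Set (H →L[ℂ] H)) : Set (H →L[ℂ] H) :=
  {a : H →L[ℂ] H | ∀ x ∈ I, a * x ∈ J}

open Submodule ContinuousLinearMap
open scoped InnerProductSpace

section Criterion

variable {𝕜 E F : Type*} [RCLike 𝕜] [NormedAddCommGroup E] [InnerProductSpace 𝕜 E]
  [NormedAddCommGroup F] [NormedSpace 𝕜 F] [CompleteSpace F]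

theorem isCompactOperator_of_forall_norm_comp_orthogonal_le (a : E →L[𝕜] F)
    (h : ∀ ε > 0, ∃ K : Submodule 𝕜 E, FiniteDimensional 𝕜 K ∧ ‖a ∘L Kᗮ.subtypeL‖ ≤ ε) :
    IsCompactOperator a := by
  refine isClosed_setOfPred_isCompactOperator.closure_subset
    (Metric.mem_closure_iff.2 fun ε hε => ?_)
  obtain ⟨K, hK, haK⟩ := h (ε / 2) (half_pos hε)
  refine ⟨a ∘L K.starProjection,
    (isCompactOperator_of_locallyCompactSpace_dom K.orthogonalProjectionOnto).clm_comp
      (a ∘L K.subtypeL), ?_⟩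
  have hsub : a - a ∘L K.starProjection = (a ∘L Kᗮ.subtypeL) ∘L Kᗮ.orthogonalProjectionOnto := by
    rw [comp_assoc]
    change _ = a ∘L Kᗮ.starProjection
    rw [starProjection_orthogonal, comp_sub, comp_id]
  calc dist a (a ∘L K.starProjection)
      = ‖(a ∘L Kᗮ.subtypeL) ∘L Kᗮ.orthogonalProjectionOnto‖ := by rw [dist_eq_norm, hsub]
    _ ≤ ‖a ∘L Kᗮ.subtypeL‖ * 1 :=
      opNorm_comp_le _ _ |>.trans <| by gcongr; exact orthogonalProjectionOnto_norm_le _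
    _ < ε := by linarith

theorem exists_unit_mem_orthogonal_le_norm_apply_of_not_isCompactOperator {a : E →L[𝕜] F}
    (ha : ¬ IsCompactOperator a) :
    ∃ ε > 0, ∀ K : Submodule 𝕜 E, FiniteDimensional 𝕜 K →
      ∃ v ∈ Kᗮ, ‖v‖ = 1 ∧ ε ≤ ‖a v‖ := by
  by_contra! h
  refine ha (isCompactOperator_of_forall_norm_comp_orthogonal_le a fun ε hε => ?_)
  obtain ⟨K, hK, hv⟩ := h ε hε
  exact ⟨K, hK, opNorm_le_of_unit_norm hε.le fun v hv1 => (hv v v.2 hv1).le⟩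

end Criterion

section Sequence

variable {𝕜 E F : Type*} [RCLike 𝕜] [NormedAddCommGroup E] [InnerProductSpace 𝕜 E]
  [NormedAddCommGroup F] [InnerProductSpace 𝕜 F]

theorem norm_sum_sq_eq_sum_norm_sq_of_pairwise_inner_eq_zero {ι : Type*} {v : ι → E}
    (hv : Pairwise fun i j => ⟪v i, v j⟫_𝕜 = 0) (s : Finset ι) :
    ‖∑ i ∈ s, v i‖ ^ 2 = ∑ i ∈ s, ‖v i‖ ^ 2 := by
  classical
  induction s using Finset.induction_on with
  | empty => simp
  | insert i s hi ih =>
    have hperp : ⟪v i, ∑ j ∈ s, v j⟫_𝕜 = 0 :=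
      (inner_sum _ _ _).trans <| Finset.sum_eq_zero fun j hj => hv (ne_of_mem_of_not_mem hj hi).symm
    rw [Finset.sum_insert hi, Finset.sum_insert hi, ← ih, sq, sq, sq,
      norm_add_sq_eq_norm_sq_add_norm_sq_of_inner_eq_zero _ _ hperp]

theorem mul_norm_le_norm_apply_of_mem_topologicalClosure_span {ι : Type*} (a : E →L[𝕜] F)
    {e : ι → E} (he : Orthonormal 𝕜 e) {ε : ℝ} (hε : 0 ≤ ε) (hae : ∀ i, ε ≤ ‖a (e i)‖)
    (horth : Pairwise fun i j => ⟪a (e i), a (e j)⟫_𝕜 = 0) {y : E}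
    (hy : y ∈ (span 𝕜 (Set.range e)).topologicalClosure) : ε * ‖y‖ ≤ ‖a y‖ := by
  suffices hspan : ∀ y ∈ span 𝕜 (Set.range e), ε * ‖y‖ ≤ ‖a y‖ from
    closure_minimal (t := {y | ε * ‖y‖ ≤ ‖a y‖}) hspan (isClosed_le (by fun_prop) (by fun_prop))
      (topologicalClosure_coe (span 𝕜 (Set.range e)) ▸ hy)
  intro y hy
  obtain ⟨c, rfl⟩ := Finsupp.mem_span_range_iff_exists_finsupp.1 hy
  have hce : Pairwise fun i j => ⟪c i • e i, c j • e j⟫_𝕜 = 0 := fun i j hij => by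
    simp [inner_smul_left, inner_smul_right, he.2 hij]
  have hcae : Pairwise fun i j => ⟪c i • a (e i), c j • a (e j)⟫_𝕜 = 0 := fun i j hij => by
    simp [inner_smul_left, inner_smul_right, horth hij]
  refine pow_le_pow_iff_left₀ (by positivity) (norm_nonneg _) two_ne_zero |>.1 ?_
  calc (ε * ‖c.sum fun i r => r • e i‖) ^ 2 = ∑ i ∈ c.support, ‖c i‖ ^ 2 * ε ^ 2 := by
        rw [mul_pow, Finsupp.sum, norm_sum_sq_eq_sum_norm_sq_of_pairwise_inner_eq_zero hce,
          Finset.mul_sum]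
        simp [norm_smul, he.1, mul_comm]
    _ ≤ ∑ i ∈ c.support, ‖c i‖ ^ 2 * ‖a (e i)‖ ^ 2 := by gcongr; exact hae _
    _ = ‖a (c.sum fun i r => r • e i)‖ ^ 2 := by
        simp only [Finsupp.sum, map_sum, map_smul]
        rw [norm_sum_sq_eq_sum_norm_sq_of_pairwise_inner_eq_zero hcae]
        simp [norm_smul, mul_pow]

variable [CompleteSpace E] [CompleteSpace F]

theorem exists_orthonormal_pairwise_inner_apply_eq_zero (a : E →L[𝕜] F) {ε : ℝ}
    (ha : ∀ K : Submodule 𝕜 E, FiniteDimensional 𝕜 K → ∃ v ∈ Kᗮ, ‖v‖ = 1 ∧ ε ≤ ‖a v‖) :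
    ∃ e : ℕ → E, Orthonormal 𝕜 e ∧ (∀ n, ε ≤ ‖a (e n)‖) ∧
      Pairwise fun m n => ⟪a (e m), a (e n)⟫_𝕜 = 0 := by
  classical
  let r : E → E → Prop := fun u v => ⟪u, v⟫_𝕜 = 0 ∧ ⟪a u, a v⟫_𝕜 = 0
  have : Std.Symm r := ⟨fun u v h => ⟨inner_eq_zero_symm.1 h.1, inner_eq_zero_symm.1 h.2⟩⟩
  obtain ⟨e, he, hr⟩ := exists_seq_of_forall_finset_exists' (fun v => ‖v‖ = 1 ∧ ε ≤ ‖a v‖) r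
    fun s _ => by
      obtain ⟨v, hv, hv1, hav⟩ := ha (span 𝕜 ↑(s ∪ s.image (adjoint a ∘L a)))
        (FiniteDimensional.span_finset 𝕜 _)
      refine ⟨v, ⟨hv1, hav⟩, fun u hu =>
        ⟨hv u (subset_span (Finset.mem_coe.2 (Finset.mem_union_left _ hu))), ?_⟩⟩
      rw [← adjoint_inner_left]
      exact hv _ (subset_span (Finset.mem_coe.2
        (Finset.mem_union_right _ (Finset.mem_image_of_mem _ hu))))
  exact ⟨e, ⟨fun n => (he n).1, fun m n h => (hr h).1⟩, fun n => (he n).2,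
    fun m n h => (hr h).2⟩

end Sequence

section Separable

variable {𝕜 E G : Type*} [RCLike 𝕜] [NormedAddCommGroup E] [InnerProductSpace 𝕜 E]

theorem IsCompactOperator.isSeparable_range [SeminormedAddCommGroup G] [NormedSpace 𝕜 G]
    {x : G →L[𝕜] E} (hx : IsCompactOperator x) : TopologicalSpace.IsSeparable (Set.range x) := by
  refine (TopologicalSpace.isSeparable_iUnion.2 fun n : ℕ =>
    (hx.isCompact_closure_image_closedBall n).isSeparable).mono ?_
  rintro - ⟨z, rfl⟩
  obtain ⟨n, hn⟩ := exists_nat_ge ‖z‖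
  exact Set.mem_iUnion.2 ⟨n, subset_closure ⟨z, by simpa using hn, rfl⟩⟩

theorem Orthonormal.countable [TopologicalSpace.SeparableSpace E] {ι : Type*} {v : ι → E}
    (hv : Orthonormal 𝕜 v) : Countable ι := by
  refine Pairwise.countable_of_isOpen_disjoint (s := fun i => Metric.ball (v i) 2⁻¹)
    (fun i j hij => Metric.ball_disjoint_ball ?_) (fun _ => Metric.isOpen_ball)
    (fun _ => Metric.nonempty_ball.2 (by norm_num))
  have hsq : ‖v i - v j‖ ^ 2 = 2 := by
    rw [@norm_sub_sq 𝕜, hv.2 hij]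
    norm_num [hv.1 i, hv.1 j]
  rw [dist_eq_norm]
  nlinarith [norm_nonneg (v i - v j)]

end Separable

section Factorization

variable {𝕜 E F : Type*} [RCLike 𝕜] [NormedAddCommGroup E] [InnerProductSpace 𝕜 E]
  [NormedAddCommGroup F] [InnerProductSpace 𝕜 F] [CompleteSpace E] [CompleteSpace F]

theorem Orthonormal.exists_linearIsometry_mem_topologicalClosure_span {e : ℕ → E}
    (he : Orthonormal 𝕜 e) (G : Type*) [NormedAddCommGroup G] [InnerProductSpace 𝕜 G]
    [CompleteSpace G] [TopologicalSpace.SeparableSpace G] :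
    ∃ V : G →ₗᵢ[𝕜] E, ∀ g, V g ∈ (span 𝕜 (Set.range e)).topologicalClosure := by
  obtain ⟨w, b, -⟩ := exists_hilbertBasis 𝕜 G
  have : Countable w := b.orthonormal.countable
  obtain ⟨f, hf⟩ := Countable.exists_injective_nat w
  have hef := (he.comp f hf).orthogonalFamily
  refine ⟨hef.linearIsometry.comp b.repr.toLinearIsometry, fun g => ?_⟩
  refine (isClosed_topologicalClosure _).mem_of_tendsto (hef.hasSum_linearIsometry (b.repr g))
    (Eventually.of_forall fun s => sum_mem fun i _ => le_topologicalClosure _ ?_)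
  simpa using smul_mem _ _ (subset_span (Set.mem_range_self (f i)))

theorem AntilipschitzWith.exists_leftInverse {S : E →L[𝕜] F} {c : NNReal}
    (hS : AntilipschitzWith c S) : ∃ b : F →L[𝕜] E, Function.LeftInverse b S := by
  have hclosed := hS.isClosed_range S.uniformContinuous
  have : CompleteSpace S.range := hclosed.completeSpace_coe
  refine ⟨(S.equivRange hS.injective hclosed).symm ∘L S.range.orthogonalProjectionOnto,
    fun v => ?_⟩
  simp [orthogonalProjectionOnto_mem_subspace_eq_self (⟨S v, S.mem_range_self v⟩ : S.range)]

theorem IsCompactOperator.exists_eq_comp_comp_comp_of_not_isCompactOperator {G : Type*}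
    [SeminormedAddCommGroup G] [NormedSpace 𝕜 G] {x : G →L[𝕜] E} (hx : IsCompactOperator x)
    {a : E →L[𝕜] F} (ha : ¬ IsCompactOperator a) :
    ∃ (b : F →L[𝕜] E) (c : E →L[𝕜] E), b ∘L a ∘L c ∘L x = x := by
  obtain ⟨ε, hε, hK⟩ := exists_unit_mem_orthogonal_le_norm_apply_of_not_isCompactOperator ha
  obtain ⟨e, he, hae, horth⟩ := exists_orthonormal_pairwise_inner_apply_eq_zero a hK
  set N := x.range.topologicalClosure
  have : CompleteSpace N := (isClosed_topologicalClosure _).completeSpace_coe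
  have : TopologicalSpace.SeparableSpace N := by
    refine TopologicalSpace.IsSeparable.separableSpace ?_
    rw [topologicalClosure_coe]
    exact hx.isSeparable_range.closure
  obtain ⟨V, hV⟩ := he.exists_linearIsometry_mem_topologicalClosure_span N
  have hS : AntilipschitzWith ε⁻¹.toNNReal (a ∘L V.toContinuousLinearMap) :=
    antilipschitz_of_bound _ fun g => by
      have := mul_norm_le_norm_apply_of_mem_topologicalClosure_span a he hε.le hae horth (hV g)
      rw [V.norm_map] at this
      rw [Real.coe_toNNReal _ (by positivity), inv_mul_eq_div, le_div_iff₀ hε, mul_comm]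
      exact this
  obtain ⟨b, hb⟩ := hS.exists_leftInverse
  refine ⟨N.subtypeL ∘L b, V.toContinuousLinearMap ∘L N.orthogonalProjectionOnto, ?_⟩
  ext z
  have hxz : x z ∈ N := le_topologicalClosure _ (x.mem_range_self z)
  simpa [orthogonalProjectionOnto_mem_subspace_eq_self (⟨x z, hxz⟩ : N)] using
    congrArg Subtype.val (hb ⟨x z, hxz⟩)

end Factorization

theorem statement8_general
    (I J : Set (H →L[ℂ] H)) (hI : IsOpIdeal I) (hJ : IsOpIdeal J)
    (hIK : ∀ x ∈ I, IsCompactOperator (⇑x : H → H))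
    (hnsub : ¬ I ⊆ J) :
    ∀ a ∈ dualIdeal J I, IsCompactOperator (⇑a : H → H) := by
  intro a ha
  by_contra hnc
  obtain ⟨x, hxI, hxJ⟩ := Set.not_subset.1 hnsub
  obtain ⟨b, c, hbcx⟩ := (hIK x hxI).exists_eq_comp_comp_comp_of_not_isCompactOperator hnc
  have hbacx : b * (a * (c * x)) ∈ J := hJ.mul_mem_left b (ha _ (hI.mul_mem_left c hxI))
  exact hxJ (hbcx ▸ hbacx)

/-- If `I, J` are proper two-sided ideals of compact operators on an
infinite-dimensional Hilbert space and `I ⊄ J`, then `J:I` consists of compact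
operators. -/
theorem statement8 (hdim : ¬ FiniteDimensional ℂ H)
    (I J : Set (H →L[ℂ] H)) (hI : IsOpIdeal I) (hJ : IsOpIdeal J)
    (hIK : ∀ x ∈ I, IsCompactOperator (⇑x : H → H))
    (hJK : ∀ x ∈ J, IsCompactOperator (⇑x : H → H))
    (hIne : I ≠ ∅) (hJne : J ≠ ∅)
    (hnsub : ¬ I ⊆ J) :
    ∀ a ∈ dualIdeal J I, IsCompactOperator (⇑a : H → H) :=
  statement8_general I J hI hJ hIK hnsub
end

section
/- Let G, F be solid rearrangement-invariant sequence spaces in c_0 ∪ {l_∞} and define F:G = {ξ ∈ l_∞ : ξη ∈ F for all η ∈ G}. If F:G ≠ l_∞, then F:G ⊆ c_0. -/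
open Filter Topology

noncomputable section

/-- Bounded real sequences. -/
def linf : Set (ℕ → ℝ) := {ξ | ∃ M : ℝ, ∀ n, |ξ n| ≤ M}

/-- Real sequences converging to zero. -/
def czero : Set (ℕ → ℝ) := {ξ | Tendsto ξ atTop (𝓝 0)}

/-- The decreasing rearrangement of a bounded sequence:
`ξ* n = inf {s ≥ 0 : #{k : |ξ k| > s} ≤ n}` (indexed from `0`). -/
def dr (ξ : ℕ → ℝ) (n : ℕ) : ℝ :=
  sInf {s : ℝ | 0 ≤ s ∧ {k | s < |ξ k|}.Finite ∧ {k | s < |ξ k|}.ncard ≤ n}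

/-- The doubling (dilation) operator `σ₂`, repeating each entry twice. -/
def sigma2 (ζ : ℕ → ℝ) (n : ℕ) : ℝ := ζ (n / 2)

/-- A solid rearrangement-invariant sequence space inside `l_∞`. -/
structure IsSRI (E : Set (ℕ → ℝ)) : Prop where
  nonzero : E ≠ {0}
  subset_linf : E ⊆ linf
  zero_mem : (0 : ℕ → ℝ) ∈ E
  add_mem : ∀ {ξ η : ℕ → ℝ}, ξ ∈ E → η ∈ E → ξ + η ∈ E
  smul_mem : ∀ (c : ℝ) {ξ : ℕ → ℝ}, ξ ∈ E → c • ξ ∈ E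
  solid : ∀ {ξ η : ℕ → ℝ}, η ∈ E → ξ ∈ linf → (∀ n, dr ξ n ≤ dr η n) → ξ ∈ E

/-- The `F`-dual (multiplier space) `F:G = {ξ ∈ l_∞ : ξη ∈ F for all η ∈ G}`. -/
def seqMul (F G : Set (ℕ → ℝ)) : Set (ℕ → ℝ) :=
  {ξ ∈ linf | ∀ η ∈ G, ξ * η ∈ F}

end

namespace S13

def drSet (χ : ℕ → ℝ) (n : ℕ) : Set ℝ :=
  {s : ℝ | 0 ≤ s ∧ {k | s < |χ k|}.Finite ∧ {k | s < |χ k|}.ncard ≤ n}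

lemma dr_eq (χ : ℕ → ℝ) (n : ℕ) : dr χ n = sInf (drSet χ n) := rfl

lemma drSet_bddBelow (χ : ℕ → ℝ) (n : ℕ) : BddBelow (drSet χ n) :=
  ⟨0, fun _ hs => hs.1⟩

lemma drSet_nonempty {χ : ℕ → ℝ} (hχ : χ ∈ linf) (n : ℕ) : (drSet χ n).Nonempty := by
  obtain ⟨M, hM⟩ := hχ
  have he : {k | max M 0 < |χ k|} = (∅ : Set ℕ) := by
    ext k
    simp only [Set.mem_setOf_eq, Set.mem_empty_iff_false, iff_false, not_lt]
    exact (hM k).trans (le_max_left _ _)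
  exact ⟨max M 0, le_max_right _ _, by rw [he]; exact Set.finite_empty,
    by rw [he]; simp⟩

lemma dr_nonneg (χ : ℕ → ℝ) (n : ℕ) : 0 ≤ dr χ n :=
  Real.sInf_nonneg (fun _ hs => hs.1)

lemma dr_anti {χ : ℕ → ℝ} (hχ : χ ∈ linf) {m n : ℕ} (h : m ≤ n) : dr χ n ≤ dr χ m := by
  apply csInf_le_csInf (drSet_bddBelow χ n) (drSet_nonempty hχ m)
  exact fun s hs => ⟨hs.1, hs.2.1, hs.2.2.trans h⟩

lemma le_dr {χ : ℕ → ℝ} (hχ : χ ∈ linf) {t : ℝ} {n : ℕ} (A : Finset ℕ)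
    (hcard : n < A.card) (hA : ∀ k ∈ A, t ≤ |χ k|) : t ≤ dr χ n := by
  apply le_csInf (drSet_nonempty hχ n)
  intro s hs
  by_contra hlt
  push_neg at hlt
  have hsub : (A : Set ℕ) ⊆ {k | s < |χ k|} :=
    fun k hk => lt_of_lt_of_le hlt (hA k hk)
  have := Set.ncard_le_ncard hsub hs.2.1
  rw [Set.ncard_coe_finset] at this
  have h22 := hs.2.2
  omega

lemma dr_mul_le {ζ η : ℕ → ℝ} {M : ℝ} (hM : 0 < M) (hζ : ∀ k, |ζ k| ≤ M)
    (hη : η ∈ linf) (n : ℕ) : dr (ζ * η) n ≤ M * dr η n := by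
  have key : ∀ s ∈ drSet η n, dr (ζ * η) n ≤ M * s := by
    intro s hs
    apply csInf_le (drSet_bddBelow _ _)
    have hsub : {k | M * s < |(ζ * η) k|} ⊆ {k | s < |η k|} := by
      intro k hk
      simp only [Set.mem_setOf_eq, Pi.mul_apply, abs_mul] at hk ⊢
      have h1 : |ζ k| * |η k| ≤ M * |η k| :=
        mul_le_mul_of_nonneg_right (hζ k) (abs_nonneg _)
      have h2 : M * s < M * |η k| := lt_of_lt_of_le hk h1
      exact lt_of_mul_lt_mul_left (by linarith) (le_of_lt hM)
    exact ⟨mul_nonneg hM.le hs.1, hs.2.1.subset hsub,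
      (Set.ncard_le_ncard hsub hs.2.1).trans hs.2.2⟩
  have h2 : dr (ζ * η) n / M ≤ dr η n := by
    apply le_csInf (drSet_nonempty hη n)
    intro s hs
    exact (div_le_iff₀ hM).mpr ((key s hs).trans_eq (mul_comm M s))
  rw [div_le_iff₀ hM] at h2
  linarith [h2]

lemma dr_rearr_le {η η' : ℕ → ℝ} {a : ℕ → ℕ} (hηl : η ∈ linf)
    (hval : ∀ i, η' (a i) = dr η i)
    (hzero : ∀ k, (∀ i, a i ≠ k) → η' k = 0)
    (n : ℕ) : dr η' n ≤ dr η n := by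
  apply csInf_le_csInf (drSet_bddBelow _ _) (drSet_nonempty hηl n)
  intro s hs
  have hs0 := hs.1
  have hdrn : dr η n ≤ s := csInf_le (drSet_bddBelow _ _) hs
  have hsub : {k | s < |η' k|} ⊆ ↑(Finset.image a (Finset.range n)) := by
    intro k hk
    simp only [Set.mem_setOf_eq] at hk
    by_cases hex : ∃ i, a i = k
    · obtain ⟨i, rfl⟩ := hex
      rw [hval i, abs_of_nonneg (dr_nonneg η i)] at hk
      have hin : i < n := by
        by_contra hge
        push_neg at hge
        have := dr_anti hηl hge
        linarith
      simp only [Finset.coe_image, Set.mem_image, Finset.mem_coe, Finset.mem_range]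
      exact ⟨i, hin, rfl⟩
    · push_neg at hex
      rw [hzero k hex] at hk
      simp at hk
      linarith
  refine ⟨hs0, (Finset.finite_toSet _).subset hsub, ?_⟩
  calc {k | s < |η' k|}.ncard ≤ (↑(Finset.image a (Finset.range n)) : Set ℕ).ncard :=
        Set.ncard_le_ncard hsub (Finset.finite_toSet _)
    _ = (Finset.image a (Finset.range n)).card := Set.ncard_coe_finset _
    _ ≤ n := Finset.card_image_le.trans (by simp)

end S13

/-- For solid rearrangement-invariant sequence spaces `G, F`, if the
multiplier space `F:G` is not all of `l_∞` then `F:G ⊆ c₀`. -/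
theorem statement13 (F G : Set (ℕ → ℝ)) (hF : IsSRI F) (hG : IsSRI G)
    (h : seqMul F G ≠ linf) :
    seqMul F G ⊆ czero := by

  classical
  intro xi hxi
  by_contra hnc
  -- extract epsilon and an infinite set where |xi| >= eps
  have hfreq : ∃ ε > (0:ℝ), ∀ N, ∃ k ≥ N, ε ≤ |xi k| := by
    by_contra hcon
    push_neg at hcon
    apply hnc
    rw [czero, Set.mem_setOf_eq, Metric.tendsto_atTop]
    intro ε hε
    obtain ⟨N, hN⟩ := hcon ε hε
    exact ⟨N, fun n hn => by rw [Real.dist_eq, sub_zero]; exact hN n hn⟩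
  obtain ⟨ε, hε, hfr⟩ := hfreq
  set A : Set ℕ := {k | ε ≤ |xi k|} with hAdef
  have hA : A.Infinite := by
    apply Set.infinite_of_not_bddAbove
    rintro ⟨b, hb⟩
    obtain ⟨k, hk1, hk2⟩ := hfr (b + 1)
    have : k ≤ b := hb hk2
    omega
  set e := Set.Infinite.natEmbedding A hA with hedef
  set a : ℕ → ℕ := fun i => (e i : ℕ) with hadef
  have ha_inj : Function.Injective a := fun i j hij => e.injective (Subtype.ext hij)
  have ha_mem : ∀ i, ε ≤ |xi (a i)| := fun i => (e i).2
  obtain ⟨hxil, hximul⟩ := hxi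
  -- show every bounded sequence is in seqMul F G
  have hmain : linf ⊆ seqMul F G := by
    intro ζ hζ
    obtain ⟨M0, hM0⟩ := hζ
    set M : ℝ := max M0 1 with hMdef
    have hM : (0:ℝ) < M := lt_of_lt_of_le one_pos (le_max_right _ _)
    have hζM : ∀ k, |ζ k| ≤ M := fun k => (hM0 k).trans (le_max_left _ _)
    refine ⟨⟨M, hζM⟩, ?_⟩
    intro η hη
    have hηl : η ∈ linf := hG.subset_linf hη
    -- the rearranged sequence η'
    set η' : ℕ → ℝ := fun k => if h : ∃ i, a i = k then dr η h.choose else 0 with hη'def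
    have hval : ∀ i, η' (a i) = dr η i := by
      intro i
      have hex : ∃ j, a j = a i := ⟨i, rfl⟩
      simp only [hη'def, dif_pos hex]
      congr 1
      exact ha_inj hex.choose_spec
    have hzero : ∀ k, (∀ i, a i ≠ k) → η' k = 0 := by
      intro k hk
      simp only [hη'def, dif_neg (not_exists.mpr hk)]
    have hη'l : η' ∈ linf := by
      refine ⟨dr η 0, fun k => ?_⟩
      by_cases hex : ∃ i, a i = k
      · obtain ⟨i, rfl⟩ := hex
        rw [hval i, abs_of_nonneg (S13.dr_nonneg η i)]
        exact S13.dr_anti hηl (Nat.zero_le i)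
      · push_neg at hex
        rw [hzero k hex, abs_zero]
        exact S13.dr_nonneg η 0
    have hη'G : η' ∈ G := hG.solid hη hη'l (S13.dr_rearr_le hηl hval hzero)
    have hxiη' : xi * η' ∈ F := hximul η' hη'G
    set c : ℝ := M / ε with hcdef
    have hc : (0:ℝ) ≤ c := le_of_lt (div_pos hM hε)
    set χ : ℕ → ℝ := c • (xi * η') with hχdef
    have hχF : χ ∈ F := hF.smul_mem c hxiη'
    have hχl : χ ∈ linf := by
      obtain ⟨M1, hM1⟩ := hxil
      obtain ⟨M2, hM2⟩ := hη'l
      refine ⟨c * (M1 * M2), fun k => ?_⟩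
      have h1 : (0:ℝ) ≤ |xi k| := abs_nonneg _
      have h2 : (0:ℝ) ≤ |η' k| := abs_nonneg _
      have : |χ k| = c * (|xi k| * |η' k|) := by
        simp [hχdef, abs_mul, abs_of_nonneg hc]
      rw [this]
      apply mul_le_mul_of_nonneg_left _ hc
      exact mul_le_mul (hM1 k) (hM2 k) h2 ((abs_nonneg _).trans (hM1 k))
    have hζηl : ζ * η ∈ linf := by
      obtain ⟨M2, hM2⟩ := hηl
      have hM2' : (0:ℝ) ≤ M2 := (abs_nonneg _).trans (hM2 0)
      refine ⟨M * M2, fun k => ?_⟩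
      rw [Pi.mul_apply, abs_mul]
      exact mul_le_mul (hζM k) (hM2 k) (abs_nonneg _) hM.le
    -- key inequality
    have hkey : ∀ n, dr (ζ * η) n ≤ dr χ n := by
      intro n
      have h1 : dr (ζ * η) n ≤ M * dr η n := S13.dr_mul_le hM hζM hηl n
      have h2 : M * dr η n ≤ dr χ n := by
        apply S13.le_dr hχl (Finset.image a (Finset.range (n + 1)))
        · rw [Finset.card_image_of_injective _ ha_inj, Finset.card_range]
          omega
        · intro k hk
          simp only [Finset.mem_image, Finset.mem_range] at hk
          obtain ⟨i, hi, rfl⟩ := hk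
          have hχval : χ (a i) = c * (xi (a i) * dr η i) := by
            simp [hχdef, hval i]
          rw [hχval, abs_mul, abs_mul, abs_of_nonneg hc,
            abs_of_nonneg (S13.dr_nonneg η i)]
          have hce : c * ε = M := div_mul_cancel₀ M (ne_of_gt hε)
          have hstep : ε * dr η n ≤ |xi (a i)| * dr η i :=
            mul_le_mul (ha_mem i) (S13.dr_anti hηl (by omega))
              (S13.dr_nonneg η n) (abs_nonneg _)
          calc M * dr η n = c * (ε * dr η n) := by rw [← mul_assoc, hce]
            _ ≤ c * (|xi (a i)| * dr η i) := mul_le_mul_of_nonneg_left hstep hc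
      exact h1.trans h2
    exact hF.solid hχF hζηl hkey
  exact h (Set.Subset.antisymm (fun ζ hζ => hζ.1) hmain)
end

section
/- Let G, F be solid rearrangement-invariant sequence spaces with F:G ≠ l_∞. Then F:G = {ξ ∈ c_0 : ξ* η* ∈ F for all η ∈ G}. Consequently, F:G is itself a solid rearrangement-invariant space. -/
open Filter Topology

/-
Outside `c₀` the multiplier space is all of `l_∞`: if `ξ ∈ F:G` has infinitely many entries of
size `≥ ε`, placing any `η ∈ G` on those entries shows `η ∈ F`, i.e. `G ⊆ F`, and then every
bounded sequence multiplies `G` into `F`. Inside `c₀`, `ξ` can be enumerated in decreasing order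
of `|ξ|` by an injection `p`; placing `η*` along `p` gives an element of `G` whose product with
`ξ` is a rearrangement of `ξ* η*`, so `ξ* η* ∈ F`. Conversely `(ξη)* ≤ σ₂(ξ* η*)`, and `σ₂ ζ`
is the sum of two rearrangements of `ζ`, so `ξ* η* ∈ F` forces `ξη ∈ F`. In the resulting
description membership only depends on `ξ*`, which makes `F:G` solid.
-/

lemma linf_add {ξ η : ℕ → ℝ} (hξ : ξ ∈ linf) (hη : η ∈ linf) : ξ + η ∈ linf := by
  obtain ⟨M, hM⟩ := hξ
  obtain ⟨M', hM'⟩ := hη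
  exact ⟨M + M', fun n => (abs_add_le _ _).trans (add_le_add (hM n) (hM' n))⟩

lemma linf_smul {ξ : ℕ → ℝ} (hξ : ξ ∈ linf) (c : ℝ) : c • ξ ∈ linf := by
  obtain ⟨M, hM⟩ := hξ
  refine ⟨|c| * M, fun n => ?_⟩
  rw [Pi.smul_apply, smul_eq_mul, abs_mul]
  exact mul_le_mul_of_nonneg_left (hM n) (abs_nonneg c)

lemma linf_mul {ξ η : ℕ → ℝ} (hξ : ξ ∈ linf) (hη : η ∈ linf) : ξ * η ∈ linf := by
  obtain ⟨M, hM⟩ := hξ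
  obtain ⟨M', hM'⟩ := hη
  refine ⟨M * M', fun n => ?_⟩
  rw [Pi.mul_apply, abs_mul]
  exact mul_le_mul (hM n) (hM' n) (abs_nonneg _) ((abs_nonneg _).trans (hM n))

lemma linf_of_abs_le {ξ η : ℕ → ℝ} (hη : η ∈ linf) (h : ∀ k, |ξ k| ≤ |η k|) : ξ ∈ linf := by
  obtain ⟨M, hM⟩ := hη
  exact ⟨M, fun k => (h k).trans (hM k)⟩

lemma linf_of_antitone {ξ : ℕ → ℝ} (h0 : ∀ n, 0 ≤ ξ n) (ha : Antitone ξ) : ξ ∈ linf :=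
  ⟨ξ 0, fun n => by rw [abs_of_nonneg (h0 n)]; exact ha n.zero_le⟩

lemma linf_extend {e : ℕ → ℕ} {ζ : ℕ → ℝ} (hζ : ζ ∈ linf) : Function.extend e ζ 0 ∈ linf := by
  classical
  obtain ⟨M, hM⟩ := hζ
  refine ⟨max M 0, fun k => ?_⟩
  rw [Function.extend_def]
  split_ifs
  · exact le_max_of_le_left (hM _)
  · simp

lemma czero_subset_linf : czero ⊆ linf := fun ξ hξ => by
  obtain ⟨M, hM⟩ := isBounded_iff_forall_norm_le.mp (Metric.isBounded_range_of_tendsto ξ hξ)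
  exact ⟨M, fun n => hM _ (Set.mem_range_self n)⟩

lemma mem_czero_iff {ξ : ℕ → ℝ} : ξ ∈ czero ↔ ∀ ε > 0, {k | ε ≤ |ξ k|}.Finite := by
  simp only [czero, Set.mem_ofPred_eq, ← Nat.cofinite_eq_atTop, Metric.tendsto_nhds,
    eventually_cofinite, Real.dist_eq, sub_zero, not_lt]

section DecreasingRearrangement

variable {ξ η : ℕ → ℝ} {n : ℕ}

lemma dr_nonneg (ξ : ℕ → ℝ) (n : ℕ) : 0 ≤ dr ξ n :=
  Real.sInf_nonneg fun _ hs => hs.1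

lemma dr_le_of_subset {s : ℝ} (hs : 0 ≤ s) {t : Set ℕ} (ht : t.Finite)
    (hsub : {k | s < |ξ k|} ⊆ t) (hcard : t.ncard ≤ n) : dr ξ n ≤ s :=
  csInf_le ⟨0, fun _ hs => hs.1⟩
    ⟨hs, ht.subset hsub, (Set.ncard_le_ncard hsub ht).trans hcard⟩

lemma dr_spec (hξ : ξ ∈ linf) (n : ℕ) :
    {k | dr ξ n < |ξ k|}.Finite ∧ {k | dr ξ n < |ξ k|}.ncard ≤ n := by
  have hne : {s : ℝ | 0 ≤ s ∧ {k | s < |ξ k|}.Finite ∧ {k | s < |ξ k|}.ncard ≤ n}.Nonempty := by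
    obtain ⟨M, hM⟩ := hξ
    have hempty : {k | max M 0 < |ξ k|} = ∅ :=
      Set.eq_empty_of_forall_notMem fun k hk => (le_max_of_le_left (hM k)).not_gt hk
    exact ⟨max M 0, le_max_right M 0, by rw [hempty]; simp⟩
  by_contra hc
  obtain ⟨t, hts, htc⟩ : ∃ t : Finset ℕ, ↑t ⊆ {k | dr ξ n < |ξ k|} ∧ t.card = n + 1 := by
    by_cases hfin : {k | dr ξ n < |ξ k|}.Finite
    · have hn : n + 1 ≤ {k | dr ξ n < |ξ k|}.ncard := by
        have := not_and.mp hc hfin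
        omega
      obtain ⟨t, hts, htn⟩ := Set.exists_subset_card_eq hn
      refine ⟨(hfin.subset hts).toFinset, by simpa using hts, ?_⟩
      rw [← htn, Set.ncard_eq_toFinset_card _ (hfin.subset hts)]
    · exact Set.Infinite.exists_subset_card_eq hfin (n + 1)
  have htne : t.Nonempty := Finset.card_pos.mp (by omega)
  -- some admissible `s` lies below the smallest of the `n + 1` values `|ξ k|`, `k ∈ t`
  obtain ⟨s, ⟨-, hsfin, hscard⟩, hsm⟩ := exists_lt_of_csInf_lt hne
    ((Finset.lt_inf'_iff htne).mpr fun k hk => hts hk)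
  have hsub : (↑t : Set ℕ) ⊆ {k | s < |ξ k|} := fun k hk =>
    hsm.trans_le (Finset.inf'_le (fun k => |ξ k|) hk)
  have := Set.ncard_le_ncard hsub hsfin
  rw [Set.ncard_coe_finset] at this
  omega

lemma le_dr_of_card_lt {b : ℝ} (hξ : ξ ∈ linf) {t : Finset ℕ} (ht : n < t.card)
    (hb : ∀ k ∈ t, b ≤ |ξ k|) : b ≤ dr ξ n := by
  by_contra! hlt
  obtain ⟨hfin, hcard⟩ := dr_spec hξ n
  have hsub : (↑t : Set ℕ) ⊆ {k | dr ξ n < |ξ k|} := fun k hk => hlt.trans_le (hb k hk)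
  have := Set.ncard_le_ncard hsub hfin
  rw [Set.ncard_coe_finset] at this
  omega

lemma dr_antitone (hξ : ξ ∈ linf) : Antitone (dr ξ) := fun m _ hmn =>
  dr_le_of_subset (dr_nonneg ξ m) (dr_spec hξ m).1 subset_rfl ((dr_spec hξ m).2.trans hmn)

lemma dr_mono (hη : η ∈ linf) (h : ∀ k, |ξ k| ≤ |η k|) (n : ℕ) : dr ξ n ≤ dr η n :=
  dr_le_of_subset (dr_nonneg η n) (dr_spec hη n).1 (fun k hk => lt_of_lt_of_le hk (h k))
    (dr_spec hη n).2

lemma linf_dr (hξ : ξ ∈ linf) : dr ξ ∈ linf :=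
  linf_of_antitone (dr_nonneg ξ) (dr_antitone hξ)

lemma dr_of_antitone (h0 : ∀ n, 0 ≤ ξ n) (ha : Antitone ξ) (n : ℕ) : dr ξ n = ξ n := by
  refine le_antisymm (dr_le_of_subset (h0 n) (Set.finite_Iio n) (fun k hk => ?_) (by simp))
    (le_dr_of_card_lt (linf_of_antitone h0 ha) (t := Finset.range (n + 1)) (by simp)
      fun k hk => (ha (Finset.mem_range_succ_iff.mp hk)).trans (le_abs_self _))
  by_contra hkn
  exact (ha (not_lt.mp hkn)).not_gt (by rwa [Set.mem_ofPred_eq, abs_of_nonneg (h0 k)] at hk)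

lemma dr_dr (hξ : ξ ∈ linf) : dr (dr ξ) = dr ξ :=
  funext (dr_of_antitone (dr_nonneg ξ) (dr_antitone hξ))

lemma dr_eq_of_injective {j : ℕ → ℕ} (hj : Function.Injective j) {ζ : ℕ → ℝ}
    (hval : ∀ i, |η (j i)| = |ζ i|) (hzero : ∀ k, (¬ ∃ i, j i = k) → η k = 0) :
    dr η = dr ζ := by
  have hsets : ∀ s : ℝ, 0 ≤ s → {k | s < |η k|} = j '' {i | s < |ζ i|} := by
    intro s hs
    ext k
    by_cases hk : ∃ i, j i = k
    · obtain ⟨i, rfl⟩ := hk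
      simp [hj.eq_iff, hval]
    · simp only [Set.mem_ofPred_eq, hzero k hk, abs_zero, Set.mem_image]
      exact iff_of_false hs.not_gt fun ⟨i, _, hi⟩ => hk ⟨i, hi⟩
  funext n
  unfold dr
  congr 1
  ext s
  by_cases hs : 0 ≤ s
  · simp only [Set.mem_ofPred_eq, hsets s hs, Set.finite_image_iff hj.injOn,
      Set.ncard_image_of_injective _ hj]
  · simp [hs]

lemma dr_extend {e : ℕ → ℕ} (he : Function.Injective e) (ζ : ℕ → ℝ) :
    dr (Function.extend e ζ 0) = dr ζ :=
  dr_eq_of_injective he (fun i => by rw [he.extend_apply])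
    fun k hk => by rw [Function.extend_apply' _ _ _ hk, Pi.zero_apply]

lemma dr_mul_add_le (hξ : ξ ∈ linf) (hη : η ∈ linf) (m n : ℕ) :
    dr (ξ * η) (m + n) ≤ dr ξ m * dr η n := by
  obtain ⟨hfin₁, hcard₁⟩ := dr_spec hξ m
  obtain ⟨hfin₂, hcard₂⟩ := dr_spec hη n
  refine dr_le_of_subset (mul_nonneg (dr_nonneg ξ m) (dr_nonneg η n)) (hfin₁.union hfin₂)
    (fun k hk => ?_) ((Set.ncard_union_le _ _).trans (add_le_add hcard₁ hcard₂))
  by_contra! hcon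
  simp only [Set.mem_union, Set.mem_ofPred_eq, not_or, not_lt] at hcon hk
  rw [Pi.mul_apply, abs_mul] at hk
  exact hk.not_ge (mul_le_mul hcon.1 hcon.2 (abs_nonneg _) (dr_nonneg ξ m))

lemma czero_of_dr_le (hξ : ξ ∈ linf) (hη : η ∈ czero) (h : ∀ n, dr ξ n ≤ dr η n) :
    ξ ∈ czero := by
  refine mem_czero_iff.mpr fun ε hε => ?_
  set S := {k | ε / 2 < |η k|}
  have hS : S.Finite := (mem_czero_iff.mp hη (ε / 2) (by positivity)).subset
    fun k (hk : ε / 2 < |η k|) => hk.le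
  have hdr : dr ξ S.ncard < ε :=
    (h _).trans_lt ((dr_le_of_subset (by positivity) hS subset_rfl le_rfl).trans_lt
      (by linarith))
  exact (dr_spec hξ S.ncard).1.subset fun k hk => hdr.trans_le hk

end DecreasingRearrangement

section Enumeration

variable {ξ : ℕ → ℝ}

lemma exists_isMaxOn_compl (hξ : ξ ∈ czero) (s : Finset ℕ) :
    ∃ a ∉ s, ∀ b ∉ s, |ξ b| ≤ |ξ a| := by
  obtain ⟨a₀, ha₀⟩ := s.finite_toSet.infinite_compl.nonempty
  by_cases hz : ∀ b ∉ s, ξ b = 0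
  · exact ⟨a₀, ha₀, fun b hb => by rw [hz b hb, hz a₀ ha₀]⟩
  push Not at hz
  obtain ⟨a₁, ha₁s, ha₁⟩ := hz
  set T := {k | k ∉ s ∧ |ξ a₁| ≤ |ξ k|}
  have hT : T.Finite :=
    (mem_czero_iff.mp hξ _ (abs_pos.mpr ha₁)).subset fun k hk => hk.2
  obtain ⟨a, ⟨has, -⟩, ha⟩ := Set.exists_max_image T (fun k => |ξ k|) hT ⟨a₁, ha₁s, le_rfl⟩
  refine ⟨a, has, fun b hb => ?_⟩
  rcases le_or_gt |ξ a₁| |ξ b| with hle | hlt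
  · exact ha b ⟨hb, hle⟩
  · exact hlt.le.trans (ha a₁ ⟨ha₁s, le_rfl⟩)

open Classical in
/-- Junk value `0` when `|ξ|` has no maximum off `s`, which cannot happen for `ξ ∈ c₀`. -/
noncomputable def maxIndexOff (ξ : ℕ → ℝ) (s : Finset ℕ) : ℕ :=
  if h : ∃ a ∉ s, ∀ b ∉ s, |ξ b| ≤ |ξ a| then h.choose else 0

lemma maxIndexOff_spec (hξ : ξ ∈ czero) (s : Finset ℕ) :
    maxIndexOff ξ s ∉ s ∧ ∀ b ∉ s, |ξ b| ≤ |ξ (maxIndexOff ξ s)| := by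
  rw [maxIndexOff, dif_pos (exists_isMaxOn_compl hξ s)]
  exact (exists_isMaxOn_compl hξ s).choose_spec

noncomputable def greedyPrefix (ξ : ℕ → ℝ) : ℕ → Finset ℕ
  | 0 => ∅
  | n + 1 => insert (maxIndexOff ξ (greedyPrefix ξ n)) (greedyPrefix ξ n)

noncomputable def greedyEnum (ξ : ℕ → ℝ) (i : ℕ) : ℕ := maxIndexOff ξ (greedyPrefix ξ i)

lemma greedyPrefix_eq_image (n : ℕ) :
    greedyPrefix ξ n = (Finset.range n).image (greedyEnum ξ) := by
  induction n with
  | zero => rfl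
  | succ n ih => rw [greedyPrefix, Finset.range_add_one, Finset.image_insert, ← ih]; rfl

lemma greedyEnum_notMem_greedyPrefix (hξ : ξ ∈ czero) (i : ℕ) :
    greedyEnum ξ i ∉ greedyPrefix ξ i :=
  (maxIndexOff_spec hξ _).1

lemma greedyEnum_injective (hξ : ξ ∈ czero) : Function.Injective (greedyEnum ξ) := by
  refine fun i j hij => le_antisymm ?_ ?_ <;> by_contra! hlt
  · refine greedyEnum_notMem_greedyPrefix hξ i ?_
    rw [greedyPrefix_eq_image]
    exact Finset.mem_image.mpr ⟨j, Finset.mem_range.mpr hlt, hij.symm⟩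
  · refine greedyEnum_notMem_greedyPrefix hξ j ?_
    rw [greedyPrefix_eq_image]
    exact Finset.mem_image.mpr ⟨i, Finset.mem_range.mpr hlt, hij⟩

lemma card_greedyPrefix (hξ : ξ ∈ czero) (n : ℕ) : (greedyPrefix ξ n).card = n := by
  rw [greedyPrefix_eq_image, Finset.card_image_of_injective _ (greedyEnum_injective hξ),
    Finset.card_range]

lemma abs_greedyEnum_antitone (hξ : ξ ∈ czero) : Antitone fun i => |ξ (greedyEnum ξ i)| := by
  refine fun i j hij => (maxIndexOff_spec hξ (greedyPrefix ξ i)).2 _ fun hmem => ?_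
  rw [greedyPrefix_eq_image] at hmem
  obtain ⟨l, hl, hlj⟩ := Finset.mem_image.mp hmem
  have := greedyEnum_injective hξ hlj
  rw [Finset.mem_range] at hl
  omega

lemma dr_eq_abs_greedyEnum (hξ : ξ ∈ czero) (i : ℕ) : dr ξ i = |ξ (greedyEnum ξ i)| := by
  refine le_antisymm (dr_le_of_subset (abs_nonneg _) (greedyPrefix ξ i).finite_toSet
    (fun k hk => ?_) (by rw [Set.ncard_coe_finset, card_greedyPrefix hξ]))
    (le_dr_of_card_lt (czero_subset_linf hξ) (t := greedyPrefix ξ (i + 1))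
      (by rw [card_greedyPrefix hξ]; omega) fun k hk => ?_)
  · by_contra hki
    exact ((maxIndexOff_spec hξ _).2 k hki).not_gt hk
  · rw [greedyPrefix_eq_image] at hk
    obtain ⟨l, hl, rfl⟩ := Finset.mem_image.mp hk
    exact abs_greedyEnum_antitone hξ (Finset.mem_range_succ_iff.mp hl)

end Enumeration

namespace IsSRI

variable {E : Set (ℕ → ℝ)} {ξ η ζ : ℕ → ℝ}

lemma exists_apply_ne_zero (hE : IsSRI E) : ∃ ζ ∈ E, ∃ k, ζ k ≠ 0 := by
  by_contra! h
  exact hE.nonzero (Set.eq_singleton_iff_unique_mem.mpr ⟨hE.zero_mem, fun ζ hζ => funext (h ζ hζ)⟩)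

lemma mem_of_abs_le (hE : IsSRI E) (hη : η ∈ E) (h : ∀ k, |ξ k| ≤ |η k|) : ξ ∈ E :=
  hE.solid hη (linf_of_abs_le (hE.subset_linf hη) h) (dr_mono (hE.subset_linf hη) h)

lemma dr_mem (hE : IsSRI E) (hη : η ∈ E) : dr η ∈ E :=
  hE.solid hη (linf_dr (hE.subset_linf hη)) fun n => by rw [dr_dr (hE.subset_linf hη)]

lemma extend_mem (hE : IsSRI E) (hζ : ζ ∈ E) {e : ℕ → ℕ} (he : Function.Injective e) :
    Function.extend e ζ 0 ∈ E :=
  hE.solid hζ (linf_extend (hE.subset_linf hζ)) fun n => by rw [dr_extend he]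

lemma sigma2_mem (hE : IsSRI E) (hζ : ζ ∈ E) : sigma2 ζ ∈ E := by
  have heven : Function.Injective fun i : ℕ => 2 * i := fun a b h => by simpa using h
  have hodd : Function.Injective fun i : ℕ => 2 * i + 1 := fun a b h => by simpa using h
  suffices sigma2 ζ = Function.extend (2 * ·) ζ 0 + Function.extend (2 * · + 1) ζ 0 by
    rw [this]
    exact hE.add_mem (hE.extend_mem hζ heven) (hE.extend_mem hζ hodd)
  funext n
  obtain ⟨m, rfl | rfl⟩ := Nat.even_or_odd' n
  · rw [Pi.add_apply, heven.extend_apply, Function.extend_apply' _ _ _ (by omega),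
      Pi.zero_apply, add_zero, sigma2, Nat.mul_div_cancel_left m two_pos]
  · rw [Pi.add_apply, hodd.extend_apply, Function.extend_apply' _ _ _ (by omega),
      Pi.zero_apply, zero_add, sigma2]
    congr 1
    omega

end IsSRI

section Multipliers

variable {F G : Set (ℕ → ℝ)} {ξ : ℕ → ℝ}

lemma seqMul_eq_linf_of_subset (hF : IsSRI F) (hGF : G ⊆ F) : seqMul F G = linf := by
  refine Set.Subset.antisymm (fun ξ hξ => hξ.1) fun ξ hξ => ⟨hξ, fun η hη => ?_⟩
  obtain ⟨M, hM⟩ := hξ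
  refine hF.mem_of_abs_le (hF.smul_mem M (hGF hη)) fun k => ?_
  rw [Pi.mul_apply, Pi.smul_apply, smul_eq_mul, abs_mul, abs_mul,
    abs_of_nonneg ((abs_nonneg _).trans (hM 0))]
  exact mul_le_mul_of_nonneg_right (hM k) (abs_nonneg _)

lemma subset_of_mem_seqMul_of_notMem_czero (hF : IsSRI F) (hG : IsSRI G)
    (hξ : ξ ∈ seqMul F G) (hξc : ξ ∉ czero) : G ⊆ F := by
  intro η hη
  obtain ⟨ε, hε, hinf⟩ : ∃ ε > 0, {k | ε ≤ |ξ k|}.Infinite := by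
    simpa [mem_czero_iff] using hξc
  set e : ℕ → ℕ := fun i => hinf.natEmbedding _ i
  have he : Function.Injective e := fun a b h =>
    (hinf.natEmbedding _).injective (Subtype.ext h)
  have hη'F : Function.extend e η 0 ∈ F := by
    refine hF.mem_of_abs_le
      (hF.smul_mem ε⁻¹ (hξ.2 _ (hG.extend_mem hη he))) fun k => ?_
    by_cases hk : ∃ i, e i = k
    · obtain ⟨i, rfl⟩ := hk
      have hξe : 1 ≤ ε⁻¹ * |ξ (e i)| := (one_le_inv_mul₀ hε).mpr (hinf.natEmbedding _ i).2
      rw [Pi.smul_apply, smul_eq_mul, Pi.mul_apply, abs_mul, abs_mul, abs_inv, abs_of_pos hε,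
        ← mul_assoc, he.extend_apply]
      exact le_mul_of_one_le_left (abs_nonneg _) hξe
    · simp [Function.extend_apply' _ _ _ hk]
  exact hF.solid hη'F (hG.subset_linf hη) fun n => by rw [dr_extend he]

lemma seqMul_subset_czero (hF : IsSRI F) (hG : IsSRI G) (h : seqMul F G ≠ linf) :
    seqMul F G ⊆ czero := fun ξ hξ => by
  by_contra hξc
  exact h (seqMul_eq_linf_of_subset hF (subset_of_mem_seqMul_of_notMem_czero hF hG hξ hξc))

lemma dr_mul_dr_mem_of_mem_seqMul (hF : IsSRI F) (hG : IsSRI G) (hξ : ξ ∈ seqMul F G)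
    (hξc : ξ ∈ czero) {η : ℕ → ℝ} (hη : η ∈ G) : dr ξ * dr η ∈ F := by
  have hp := greedyEnum_injective hξc
  set η' := Function.extend (greedyEnum ξ) (dr η) 0 with hη'
  have hdr : dr (ξ * η') = dr (dr ξ * dr η) := by
    refine dr_eq_of_injective hp (fun i => ?_) fun k hk => ?_
    · rw [Pi.mul_apply, Pi.mul_apply, hη', hp.extend_apply, abs_mul, abs_mul,
        dr_eq_abs_greedyEnum hξc, abs_abs]
    · rw [Pi.mul_apply, hη', Function.extend_apply' _ _ _ hk, Pi.zero_apply, mul_zero]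
  have hη'G : η' ∈ G := hG.extend_mem (hG.dr_mem hη) hp
  exact hF.solid (hξ.2 η' hη'G)
    (linf_mul (linf_dr hξ.1) (linf_dr (hG.subset_linf hη))) fun n => by rw [hdr]

lemma mem_seqMul_of_dr_mul_dr_mem (hF : IsSRI F) (hG : G ⊆ linf) (hξ : ξ ∈ linf)
    (h : ∀ η ∈ G, dr ξ * dr η ∈ F) : ξ ∈ seqMul F G := by
  refine ⟨hξ, fun η hη => ?_⟩
  have hη' : η ∈ linf := hG hη
  have h0 : ∀ n, 0 ≤ sigma2 (dr ξ * dr η) n := fun n =>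
    mul_nonneg (dr_nonneg ξ _) (dr_nonneg η _)
  have ha : Antitone (sigma2 (dr ξ * dr η)) := fun i j hij =>
    mul_le_mul (dr_antitone hξ (Nat.div_le_div_right hij))
      (dr_antitone hη' (Nat.div_le_div_right hij)) (dr_nonneg η _) (dr_nonneg ξ _)
  refine hF.solid (hF.sigma2_mem (h η hη)) (linf_mul hξ hη') fun n => ?_
  rw [dr_of_antitone h0 ha]
  calc dr (ξ * η) n ≤ dr (ξ * η) (n / 2 + n / 2) := dr_antitone (linf_mul hξ hη') (by omega)
    _ ≤ dr ξ (n / 2) * dr η (n / 2) := dr_mul_add_le hξ hη' _ _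

lemma seqMul_ne_singleton_zero (hF : IsSRI F) : seqMul F G ≠ {0} := by
  obtain ⟨ζ, hζ, k, hk⟩ := hF.exists_apply_ne_zero
  have hmem : Pi.single k 1 ∈ seqMul F G := by
    refine ⟨⟨1, fun j => ?_⟩, fun η _ => hF.mem_of_abs_le (hF.smul_mem (η k / ζ k) hζ) fun j => ?_⟩
    · rw [Pi.single_apply]
      split_ifs <;> simp
    · rw [Pi.mul_apply, Pi.smul_apply, smul_eq_mul, Pi.single_apply]
      split_ifs with hj
      · rw [hj, div_mul_cancel₀ _ hk, one_mul]
      · rw [zero_mul, abs_zero]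
        exact abs_nonneg _
  intro h
  rw [h, Set.mem_singleton_iff] at hmem
  simpa using congrFun hmem k

lemma seqMul_eq_of_ne_linf (hF : IsSRI F) (hG : IsSRI G) (h : seqMul F G ≠ linf) :
    seqMul F G = {ξ | ξ ∈ czero ∧ ∀ η ∈ G, dr ξ * dr η ∈ F} := by
  ext ξ
  refine ⟨fun hξ => ?_, fun ⟨hξc, hξ⟩ => ?_⟩
  · have hξc := seqMul_subset_czero hF hG h hξ
    exact ⟨hξc, fun η hη => dr_mul_dr_mem_of_mem_seqMul hF hG hξ hξc hη⟩
  · exact mem_seqMul_of_dr_mul_dr_mem hF hG.subset_linf (czero_subset_linf hξc) hξ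

lemma isSRI_seqMul (hF : IsSRI F) (hG : IsSRI G) (h : seqMul F G ≠ linf) :
    IsSRI (seqMul F G) where
  nonzero := seqMul_ne_singleton_zero hF
  subset_linf _ hξ := hξ.1
  zero_mem := ⟨⟨0, by simp⟩, fun η _ => by rw [zero_mul]; exact hF.zero_mem⟩
  add_mem hξ hξ' :=
    ⟨linf_add hξ.1 hξ'.1, fun η hη => by rw [add_mul]; exact hF.add_mem (hξ.2 η hη) (hξ'.2 η hη)⟩
  smul_mem c _ hξ :=
    ⟨linf_smul hξ.1 c, fun η hη => by rw [smul_mul_assoc]; exact hF.smul_mem c (hξ.2 η hη)⟩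
  solid {ξ ξ₀} hξ₀ hξ hle := by
    rw [seqMul_eq_of_ne_linf hF hG h] at hξ₀ ⊢
    refine ⟨czero_of_dr_le hξ hξ₀.1 hle, fun η hη => hF.mem_of_abs_le (hξ₀.2 η hη) fun n => ?_⟩
    simp only [Pi.mul_apply, abs_mul, abs_of_nonneg (dr_nonneg _ _)]
    exact mul_le_mul_of_nonneg_right (hle n) (dr_nonneg η n)

end Multipliers

/-- For solid rearrangement-invariant sequence spaces `G, F` with
`F:G ≠ l_∞`, the multiplier space is
`F:G = {ξ ∈ c₀ : ξ* η* ∈ F for all η ∈ G}`; consequently `F:G` is itself a solid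
rearrangement-invariant space. -/
theorem statement14 (F G : Set (ℕ → ℝ)) (hF : IsSRI F) (hG : IsSRI G)
    (h : seqMul F G ≠ linf) :
    seqMul F G = {ξ | ξ ∈ czero ∧ ∀ η ∈ G, (fun n => dr ξ n * dr η n) ∈ F} ∧
    IsSRI (seqMul F G) :=
  ⟨seqMul_eq_of_ne_linf hF hG h, isSRI_seqMul hF hG h⟩
end

section
/- Let I, J be symmetric quasi-Banach ideals of compact operators on H with I ⊄ J. For a ∈ J:I, the multiplication map T_a(x) = ax from I to J is continuous, and ‖a‖_{J:I} := sup{‖ax‖_J : x ∈ I, ‖x‖_I ≤ 1} defines a complete symmetric quasi-norm on the ideal J:I whose modulus of concavity does not exceed that of ‖·‖_J; moreover ‖ax‖_J ≤ ‖a‖_{J:I} ‖x‖_I for all a ∈ J:I, x ∈ I. -/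
open Filter Topology

noncomputable section

variable {H : Type*} [NormedAddCommGroup H] [InnerProductSpace ℂ H] [CompleteSpace H]

/-- The Calkin sequence space of an ideal `I` of compact operators:
all null sequences whose decreasing rearrangement is the singular value sequence of
some member of `I`. -/
def calkinSet (I : Set (H →L[ℂ] H)) : Set (ℕ → ℝ) :=
  {ξ | ξ ∈ czero ∧ ∃ x ∈ I, dr ξ = sv x}

/-- The ideal of compact operators associated with a sequence space `E`. -/
def CE (H : Type*) [NormedAddCommGroup H] [InnerProductSpace ℂ H] [CompleteSpace H]
    (E : Set (ℕ → ℝ)) : Set (H →L[ℂ] H) :=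
  {x | IsCompactOperator (⇑x : H → H) ∧ sv x ∈ E}

/-- Completeness of a quasi-norm on a set of sequences. -/
def SeqQCompleteOn (E : Set (ℕ → ℝ)) (q : (ℕ → ℝ) → ℝ) : Prop :=
  ∀ x : ℕ → (ℕ → ℝ), (∀ n, x n ∈ E) →
    (∀ ε : ℝ, 0 < ε → ∃ N, ∀ m n, N ≤ m → N ≤ n → q (x m - x n) < ε) →
    ∃ l ∈ E, Tendsto (fun n => q (x n - l)) atTop (𝓝 0)

/-- A symmetric quasi-Banach sequence space in `c₀`, with modulus of concavity `C`. -/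
structure IsSymSeqQN (E : Set (ℕ → ℝ)) (q : (ℕ → ℝ) → ℝ) (C : ℝ) : Prop where
  one_le : 1 ≤ C
  subset : E ⊆ czero
  zero_mem : (0 : ℕ → ℝ) ∈ E
  add_mem : ∀ ξ ∈ E, ∀ η ∈ E, ξ + η ∈ E
  smul_mem : ∀ (c : ℝ), ∀ ξ ∈ E, c • ξ ∈ E
  nonneg : ∀ ξ ∈ E, 0 ≤ q ξ
  eq_zero : ∀ ξ ∈ E, (q ξ = 0 ↔ ξ = 0)
  smul : ∀ (c : ℝ), ∀ ξ ∈ E, q (c • ξ) = |c| * q ξ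
  add_le : ∀ ξ ∈ E, ∀ η ∈ E, q (ξ + η) ≤ C * (q ξ + q η)
  solid : ∀ η ∈ E, ∀ ξ ∈ linf, (∀ n, dr ξ n ≤ dr η n) → ξ ∈ E ∧ q ξ ≤ q η
  unit : q (fun n => if n = 0 then (1 : ℝ) else 0) = 1
  complete : SeqQCompleteOn E q

end

noncomputable section

variable {H : Type*} [NormedAddCommGroup H] [InnerProductSpace ℂ H] [CompleteSpace H]

/-- The natural quasi-norm on the `J`-dual space `J:I`:
`‖a‖_{J:I} = sup {qJ (a x) : x ∈ I, qI x ≤ 1}`. -/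
def dualQN (J I : Set (H →L[ℂ] H)) (qJ qI : (H →L[ℂ] H) → ℝ) (a : H →L[ℂ] H) : ℝ :=
  sSup {r : ℝ | ∃ x ∈ I, qI x ≤ 1 ∧ r = qJ (a * x)}

/-!
Continuity of `x ↦ a x` is a closed graph theorem. Both quasi-norms dominate the operator norm,
so the graph is closed; Baire's theorem in the complete quasi-normed ideal `I` makes some sublevel
set `{x | qJ (a x) ≤ k}` dense in a ball, and successive approximation by pieces of geometrically
decaying size then bounds `qJ (a x)` on a ball around `0`.

The supremum `‖a‖_{J:I}` inherits the quasi-triangle inequality and symmetry from `qJ`. Since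
`I ⊄ J`, `I` is nonzero and hence contains every rank-one projection; testing `a` on them shows
that `‖a‖_{J:I}` dominates the operator norm, which gives definiteness, and completeness follows
by taking the limit in operator norm.
-/

open ContinuousLinearMap InnerProductSpace
open scoped InnerProductSpace

set_option linter.unusedSectionVars false

namespace IsOpIdeal

variable {I : Set (H →L[ℂ] H)}

theorem sub_mem (hI : IsOpIdeal I) {x y : H →L[ℂ] H} (hx : x ∈ I) (hy : y ∈ I) : x - y ∈ I := by
  simpa [sub_eq_add_neg] using hI.add_mem hx (hI.smul_mem (-1) hy)

theorem sum_mem (hI : IsOpIdeal I) {ι : Type*} (s : Finset ι) {y : ι → H →L[ℂ] H}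
    (hy : ∀ i ∈ s, y i ∈ I) : ∑ i ∈ s, y i ∈ I :=
  Finset.sum_induction _ (· ∈ I) (fun _ _ => hI.add_mem) hI.zero_mem hy

theorem rankOne_mem (hI : IsOpIdeal I) {x : H →L[ℂ] H} (hx : x ∈ I) (hx0 : x ≠ 0) (g f : H) :
    rankOne ℂ g f ∈ I := by
  obtain ⟨v, hv⟩ : ∃ v, x v ≠ 0 := by
    by_contra! h
    exact hx0 (ext h)
  have hfactor : rankOne ℂ g f = ((⟪x v, x v⟫_ℂ)⁻¹ • rankOne ℂ g (x v)) * x * rankOne ℂ v f := by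
    ext w
    have hxv : (‖x v‖ : ℂ) ≠ 0 := by simpa using hv
    simp [smul_smul]
    field_simp
  rw [hfactor]
  exact hI.mul_mem_right _ (hI.mul_mem_left _ hx)

theorem mem_of_finrank_range_eq_one (hI : IsOpIdeal I) {x : H →L[ℂ] H} (hx : x ∈ I)
    (hx0 : x ≠ 0) {p : H →L[ℂ] H} (hp : Module.finrank ℂ (LinearMap.range p.toLinearMap) = 1) :
    p ∈ I := by
  obtain ⟨⟨g, _⟩, hg0, hg⟩ := finrank_eq_one_iff'.1 hp
  replace hg0 : g ≠ 0 := by simpa using hg0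
  have hfactor : p = (⟪g, g⟫_ℂ)⁻¹ • (rankOne ℂ g g * p) := by
    ext w
    obtain ⟨c, hc⟩ := hg ⟨p w, w, rfl⟩
    have hc : c • g = p w := congrArg Subtype.val hc
    have hg' : (‖g‖ : ℂ) ≠ 0 := by simpa using hg0
    simp [← hc, smul_smul]
    field_simp
  rw [hfactor]
  exact hI.smul_mem _ (hI.mul_mem_right _ (hI.rankOne_mem hx hx0 g g))

end IsOpIdeal

theorem isRankOneProjection_rankOne_self {v : H} (hv : ‖v‖ = 1) :
    IsRankOneProjection (rankOne ℂ v v) := by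
  have hv0 : v ≠ 0 := norm_ne_zero_iff.1 (by simp [hv])
  refine ⟨isIdempotentElem_rankOne_self hv, (isStarProjection_rankOne_self hv).isSelfAdjoint, ?_⟩
  exact Module.finrank_eq_of_rank_eq (rank_rankOne hv0 hv0)

def QCauchy (q : (H →L[ℂ] H) → ℝ) (x : ℕ → H →L[ℂ] H) : Prop :=
  ∀ ε : ℝ, 0 < ε → ∃ N, ∀ m n, N ≤ m → N ≤ n → q (x m - x n) < ε

namespace IsSymmetricQuasiNorm

variable {I : Set (H →L[ℂ] H)} {q : (H →L[ℂ] H) → ℝ} {C : ℝ}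

theorem map_zero (hq : IsSymmetricQuasiNorm I q C) (hI : IsOpIdeal I) : q 0 = 0 :=
  (hq.eq_zero 0 hI.zero_mem).2 rfl

theorem smul_ofReal (hq : IsSymmetricQuasiNorm I q C) {c : ℝ} (hc : 0 ≤ c) {x : H →L[ℂ] H}
    (hx : x ∈ I) : q ((c : ℂ) • x) = c * q x := by
  rw [hq.smul _ x hx, Complex.norm_real, Real.norm_of_nonneg hc]

theorem map_neg (hq : IsSymmetricQuasiNorm I q C) {x : H →L[ℂ] H} (hx : x ∈ I) :
    q (-x) = q x := by
  simpa using hq.smul (-1) x hx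

theorem map_sub_comm (hq : IsSymmetricQuasiNorm I q C) (hI : IsOpIdeal I) {x y : H →L[ℂ] H}
    (hx : x ∈ I) (hy : y ∈ I) : q (x - y) = q (y - x) := by
  simpa using hq.map_neg (hI.sub_mem hy hx)

theorem sub_le (hq : IsSymmetricQuasiNorm I q C) (hI : IsOpIdeal I) {x y : H →L[ℂ] H}
    (hx : x ∈ I) (hy : y ∈ I) : q (x - y) ≤ C * (q x + q y) := by
  simpa [sub_eq_add_neg, hq.map_neg hy] using hq.add_le x hx _ (hI.smul_mem (-1) hy)

theorem mul_le_left (hq : IsSymmetricQuasiNorm I q C) (u : H →L[ℂ] H) {x : H →L[ℂ] H}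
    (hx : x ∈ I) : q (u * x) ≤ ‖u‖ * q x := by
  simpa using (hq.sym u 1 x hx).trans
    (mul_le_of_le_one_right (mul_nonneg (norm_nonneg u) (hq.nonneg x hx)) norm_id_le)

theorem mul_le_right (hq : IsSymmetricQuasiNorm I q C) {x : H →L[ℂ] H} (hx : x ∈ I)
    (b : H →L[ℂ] H) : q (x * b) ≤ q x * ‖b‖ := by
  simpa using (hq.sym 1 b x hx).trans
    (mul_le_mul_of_nonneg_right (mul_le_of_le_one_left (hq.nonneg x hx) norm_id_le)
      (norm_nonneg b))

/-- Compressing `x` between rank-one operators built from `v` and `x v` gives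
`‖x v‖² • rankOne v v`, whose quasi-norm is `‖x v‖²`. -/
theorem norm_le (hq : IsSymmetricQuasiNorm I q C) (hI : IsOpIdeal I) {x : H →L[ℂ] H}
    (hx : x ∈ I) : ‖x‖ ≤ q x := by
  rcases eq_or_ne x 0 with rfl | hx0
  · simp [hq.map_zero hI]
  refine opNorm_le_of_unit_norm (hq.nonneg x hx) fun v hv => ?_
  set p := rankOne ℂ v v
  have hpI : p ∈ I := hI.rankOne_mem hx hx0 v v
  have hcompress : rankOne ℂ v (x v) * x * p = ((‖x v‖ ^ 2 : ℝ) : ℂ) • p := by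
    ext w
    simp [p, inner_self_eq_norm_sq_to_K, smul_smul, mul_comm]
  have hle := hq.sym (rankOne ℂ v (x v)) p x hx
  rw [hcompress, hq.smul_ofReal (by positivity) hpI,
    hq.rank_one p hpI (isRankOneProjection_rankOne_self hv)] at hle
  have hp : ‖p‖ = 1 := by simp [p, hv]
  simp only [norm_rankOne, hv, one_mul, mul_one, hp, sq] at hle
  rcases (norm_nonneg (x v)).eq_or_lt with h0 | hpos
  · simpa [← h0] using hq.nonneg x hx
  · exact le_of_mul_le_mul_left hle hpos

/-- Geometric decay with ratio `θ ≤ 1 / (2C)` beats the constant lost at each quasi-triangle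
inequality: peeling off the first term costs a factor `C` and the tail is `θ` times smaller. -/
theorem sum_range_le (hq : IsSymmetricQuasiNorm I q C) (hI : IsOpIdeal I) {θ : ℝ}
    (hθ : C * θ ≤ 1 / 2) (k : ℕ) (D : ℝ) (y : ℕ → H →L[ℂ] H) (hy : ∀ j, y j ∈ I)
    (hyD : ∀ j, q (y j) ≤ D * θ ^ j) : q (∑ i ∈ Finset.range k, y i) ≤ 2 * C * D := by
  have hC : 0 ≤ C := zero_le_one.trans hq.one_le
  have hD : 0 ≤ D := (hq.nonneg _ (hy 0)).trans (by simpa using hyD 0)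
  induction k generalizing D y with
  | zero =>
    simp only [Finset.range_zero, Finset.sum_empty, hq.map_zero hI]
    positivity
  | succ k ih =>
    have htail := ih (D * θ) (fun i => y (i + 1)) (fun i => hy _)
      (fun i => by simpa [pow_succ', mul_assoc] using hyD (i + 1))
    rw [Finset.sum_range_succ']
    calc q (∑ i ∈ Finset.range k, y (i + 1) + y 0)
        ≤ C * (q (∑ i ∈ Finset.range k, y (i + 1)) + q (y 0)) :=
          hq.add_le _ (hI.sum_mem _ fun i _ => hy _) _ (hy 0)
      _ ≤ C * (2 * C * (D * θ) + D) := by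
          gcongr
          · exact htail ((hq.nonneg _ (hy 1)).trans (by simpa using hyD 1))
          · simpa using hyD 0
      _ ≤ 2 * C * D := by nlinarith [mul_le_mul_of_nonneg_left hθ (mul_nonneg hC hD)]

theorem tendsto_of_tendsto_quasiNorm_sub (hq : IsSymmetricQuasiNorm I q C) (hI : IsOpIdeal I)
    {x : ℕ → H →L[ℂ] H} (hx : ∀ n, x n ∈ I) {l : H →L[ℂ] H} (hl : l ∈ I)
    (h : Tendsto (fun n => q (x n - l)) atTop (𝓝 0)) : Tendsto x atTop (𝓝 l) :=
  tendsto_iff_norm_sub_tendsto_zero.2 <|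
    squeeze_zero (fun _ => norm_nonneg _) (fun n => hq.norm_le hI (hI.sub_mem (hx n) hl)) h

variable {x : ℕ → H →L[ℂ] H} {r : ℕ → ℝ} {θ : ℝ}

theorem sub_le_of_succ_sub_le (hq : IsSymmetricQuasiNorm I q C) (hI : IsOpIdeal I)
    (hx : ∀ n, x n ∈ I) (hθ0 : 0 ≤ θ) (hθ : C * θ ≤ 1 / 2) (hr : ∀ n, r (n + 1) ≤ θ * r n)
    (hxr : ∀ n, q (x (n + 1) - x n) ≤ r n) (m d : ℕ) :
    q (x (m + d) - x m) ≤ 2 * C * r m := by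
  have hdecay : ∀ i, r (m + i) ≤ r m * θ ^ i := by
    intro i
    induction i with
    | zero => simp
    | succ i ih =>
      calc r (m + (i + 1)) ≤ θ * r (m + i) := hr (m + i)
        _ ≤ θ * (r m * θ ^ i) := by gcongr
        _ = r m * θ ^ (i + 1) := by ring
  have htelescope : x (m + d) - x m = ∑ i ∈ Finset.range d, (x (m + (i + 1)) - x (m + i)) := by
    simpa using (Finset.sum_range_sub (fun i => x (m + i)) d).symm
  rw [htelescope]
  exact hq.sum_range_le hI hθ d (r m) _ (fun i => hI.sub_mem (hx _) (hx _))
    fun i => (hxr (m + i)).trans (hdecay i)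

theorem _root_.QCompleteOn.exists_tendsto_of_succ_sub_le (hc : QCompleteOn I q)
    (hq : IsSymmetricQuasiNorm I q C) (hI : IsOpIdeal I) (hx : ∀ n, x n ∈ I) (hθ0 : 0 ≤ θ)
    (hθ : C * θ ≤ 1 / 2) (hr : ∀ n, r (n + 1) ≤ θ * r n)
    (hxr : ∀ n, q (x (n + 1) - x n) ≤ r n) :
    ∃ l ∈ I, Tendsto (fun n => q (x n - l)) atTop (𝓝 0) ∧ ∀ n, q (l - x n) ≤ 2 * C ^ 2 * r n := by
  have hC : 1 ≤ C := hq.one_le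
  have hθ1 : θ < 1 := by nlinarith
  have hr0 : ∀ n, 0 ≤ r n := fun n => (hq.nonneg _ (hI.sub_mem (hx _) (hx _))).trans (hxr n)
  have hrθ : ∀ n, r n ≤ r 0 * θ ^ n := by
    intro n
    induction n with
    | zero => simp
    | succ n ih =>
      calc r (n + 1) ≤ θ * r n := hr n
        _ ≤ θ * (r 0 * θ ^ n) := by gcongr
        _ = r 0 * θ ^ (n + 1) := by ring
  have hrlim : Tendsto r atTop (𝓝 0) := by
    refine squeeze_zero hr0 hrθ ?_
    simpa using (tendsto_pow_atTop_nhds_zero_of_lt_one hθ0 hθ1).const_mul (r 0)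
  have hdist := hq.sub_le_of_succ_sub_le hI hx hθ0 hθ hr hxr
  have hcauchy : QCauchy q x := by
    intro ε hε
    obtain ⟨N, hN⟩ := eventually_atTop.1 <|
      (hrlim.const_mul (2 * C)).eventually (gt_mem_nhds (by simpa using hε))
    have hlt : ∀ m n, N ≤ m → m ≤ n → q (x n - x m) < ε := by
      intro m n hm hmn
      obtain ⟨d, rfl⟩ := Nat.exists_eq_add_of_le hmn
      exact (hdist m d).trans_lt (hN m hm)
    refine ⟨N, fun m n hm hn => ?_⟩
    rcases le_total m n with hmn | hnm
    · rw [hq.map_sub_comm hI (hx m) (hx n)]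
      exact hlt m n hm hmn
    · exact hlt n m hn hnm
  obtain ⟨l, hlI, hl⟩ := hc x hx hcauchy
  refine ⟨l, hlI, hl, fun n => ?_⟩
  have hbound : ∀ d, q (l - x n) ≤ C * (q (x (d + n) - l) + 2 * C * r n) := by
    intro d
    calc q (l - x n) = q ((l - x (d + n)) + (x (d + n) - x n)) := by rw [sub_add_sub_cancel]
      _ ≤ C * (q (l - x (d + n)) + q (x (d + n) - x n)) :=
          hq.add_le _ (hI.sub_mem hlI (hx _)) _ (hI.sub_mem (hx _) (hx _))
      _ ≤ C * (q (x (d + n) - l) + 2 * C * r n) := by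
          rw [hq.map_sub_comm hI hlI (hx _), add_comm d n]
          gcongr
          exact hdist n d
  have hlim : Tendsto (fun d => C * (q (x (d + n) - l) + 2 * C * r n)) atTop
      (𝓝 (C * (0 + 2 * C * r n))) :=
    ((hl.comp (tendsto_add_atTop_nat n)).add tendsto_const_nhds).const_mul C
  have := ge_of_tendsto' hlim hbound
  linarith

theorem _root_.QCompleteOn.mem_of_tendsto (hc : QCompleteOn I q)
    (hq : IsSymmetricQuasiNorm I q C) (hI : IsOpIdeal I) (hx : ∀ n, x n ∈ I)
    (hcauchy : QCauchy q x) {b : H →L[ℂ] H} (hb : Tendsto x atTop (𝓝 b)) :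
    b ∈ I ∧ Tendsto (fun n => q (x n - b)) atTop (𝓝 0) := by
  obtain ⟨l, hlI, hl⟩ := hc x hx hcauchy
  obtain rfl : l = b := tendsto_nhds_unique (hq.tendsto_of_tendsto_quasiNorm_sub hI hx hlI hl) hb
  exact ⟨hlI, hl⟩

end IsSymmetricQuasiNorm

def qClosure (q : (H →L[ℂ] H) → ℝ) (F : Set (H →L[ℂ] H)) : Set (H →L[ℂ] H) :=
  {x | ∀ ρ : ℝ, 0 < ρ → ∃ w ∈ F, q (x - w) < ρ}

/-- The Baire category theorem for a complete quasi-normed ideal. If no `F n` were dense in any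
ball, one could choose `xₙ₊₁ ∈ B(xₙ, rₙ)` with `B(xₙ₊₁, ρₙ)` disjoint from `F n` and
`rₙ₊₁ = (4C²)⁻¹ min ρₙ rₙ`; the centres converge to a point within `2C² rₙ₊₁ ≤ ρₙ / 2` of
`xₙ₊₁`, hence in no `F n`. -/
theorem QCompleteOn.exists_ball_subset_qClosure {I : Set (H →L[ℂ] H)} {q : (H →L[ℂ] H) → ℝ}
    {C : ℝ} (hc : QCompleteOn I q) (hq : IsSymmetricQuasiNorm I q C) (hI : IsOpIdeal I)
    (F : ℕ → Set (H →L[ℂ] H)) (hF : ∀ x ∈ I, ∃ k, x ∈ F k) :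
    ∃ k, ∃ x₀ ∈ I, ∃ r > 0, ∀ y ∈ I, q (y - x₀) < r → y ∈ qClosure q (F k) := by
  by_contra! h
  simp only [qClosure, Set.mem_ofPred_eq, not_forall, not_exists, not_and, not_lt] at h
  choose! y hyI hyx ρ hρ hyF using h
  have hC : 1 ≤ C := hq.one_le
  set δ : ℝ := (4 * C ^ 2)⁻¹
  have hδ0 : 0 < δ := by positivity
  have hCδ : C * δ ≤ 1 / 2 := by
    rw [mul_inv_le_iff₀ (by positivity)]
    nlinarith
  have h2Cδ : 2 * C ^ 2 * δ = 1 / 2 := by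
    simp only [δ]
    field_simp
    ring
  let s : ℕ → (H →L[ℂ] H) × ℝ := fun n =>
    Nat.rec (0, 1) (fun k p => (y k p.1 p.2, min (ρ k p.1 p.2) p.2 * δ)) n
  have hs : ∀ n, (s n).1 ∈ I ∧ 0 < (s n).2 := by
    intro n
    induction n with
    | zero => exact ⟨hI.zero_mem, one_pos⟩
    | succ n ih =>
      exact ⟨hyI _ _ ih.1 _ ih.2, mul_pos (lt_min (hρ _ _ ih.1 _ ih.2) ih.2) hδ0⟩
  obtain ⟨l, hlI, -, hl⟩ := hc.exists_tendsto_of_succ_sub_le hq hI (x := fun n => (s n).1)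
    (r := fun n => (s n).2) (fun n => (hs n).1) hδ0.le hCδ
    (fun n => by rw [mul_comm δ]; exact mul_le_mul_of_nonneg_right (min_le_right _ _) hδ0.le)
    (fun n => (hyx _ _ (hs n).1 _ (hs n).2).le)
  obtain ⟨k, hk⟩ := hF l hlI
  have hfar := hyF k _ (hs k).1 _ (hs k).2 l hk
  have hnear : q (l - (s (k + 1)).1) ≤ 2 * C ^ 2 * (min (ρ k (s k).1 (s k).2) (s k).2 * δ) :=
    hl (k + 1)
  rw [hq.map_sub_comm hI hlI (hs (k + 1)).1] at hnear
  have hρk := hρ k _ (hs k).1 _ (hs k).2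
  have hmin := min_le_left (ρ k (s k).1 (s k).2) (s k).2
  nlinarith

section Multiplier

variable {I J : Set (H →L[ℂ] H)} {qI qJ : (H →L[ℂ] H) → ℝ} {CI CJ : ℝ} {a : H →L[ℂ] H}

/-- Writing `z = (x₀ + z) - x₀` as a difference of two points of the ball moves the ball to the
origin at the cost of the factor `2 CJ` in the bound; homogeneity then rescales it. -/
theorem mem_qClosure_of_ball_subset_qClosure (hI : IsOpIdeal I)
    (hqI : IsSymmetricQuasiNorm I qI CI) (hJ : IsOpIdeal J) (hqJ : IsSymmetricQuasiNorm J qJ CJ)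
    (ha : a ∈ dualIdeal J I) {x₀ : H →L[ℂ] H} (hx₀ : x₀ ∈ I) {r k : ℝ}
    (hball : ∀ y ∈ I, qI (y - x₀) < r → y ∈ qClosure qI {w ∈ I | qJ (a * w) ≤ k})
    {c : ℝ} (hc : 0 < c) {z : H →L[ℂ] H} (hz : z ∈ I) (hzr : qI z < c * r) :
    z ∈ qClosure qI {w ∈ I | qJ (a * w) ≤ c * (2 * CJ * k)} := by
  have hCI : 0 < CI := zero_lt_one.trans_le hqI.one_le
  have hCJ : 0 ≤ CJ := zero_le_one.trans hqJ.one_le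
  intro ρ hρ
  set z' := ((c⁻¹ : ℝ) : ℂ) • z
  have hz'I : z' ∈ I := hI.smul_mem _ hz
  have hz'r : qI z' < r := by
    rw [hqI.smul_ofReal (inv_nonneg.2 hc.le) hz, inv_mul_lt_iff₀ hc]
    exact hzr
  have hr : 0 < r := (hqI.nonneg z' hz'I).trans_lt hz'r
  have hε : 0 < ρ / (2 * CI * c) := by positivity
  obtain ⟨w₁, ⟨hw₁I, hw₁k⟩, hw₁⟩ :=
    hball (x₀ + z') (hI.add_mem hx₀ hz'I) (by simpa using hz'r) _ hε
  obtain ⟨w₂, ⟨hw₂I, hw₂k⟩, hw₂⟩ :=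
    hball x₀ hx₀ (by simpa [hqI.map_zero hI] using hr) _ hε
  have hwI : w₁ - w₂ ∈ I := hI.sub_mem hw₁I hw₂I
  refine ⟨(c : ℂ) • (w₁ - w₂), ⟨hI.smul_mem _ hwI, ?_⟩, ?_⟩
  · rw [mul_smul_comm, hqJ.smul_ofReal hc.le (ha _ hwI), mul_sub]
    gcongr
    calc qJ (a * w₁ - a * w₂) ≤ CJ * (qJ (a * w₁) + qJ (a * w₂)) :=
          hqJ.sub_le hJ (ha w₁ hw₁I) (ha w₂ hw₂I)
      _ ≤ CJ * (k + k) := by gcongr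
      _ = 2 * CJ * k := by ring
  · have hsplit : z - (c : ℂ) • (w₁ - w₂) = (c : ℂ) • ((x₀ + z' - w₁) - (x₀ - w₂)) := by
      simp only [z', smul_sub, smul_add, smul_smul, ← Complex.ofReal_mul, mul_inv_cancel₀ hc.ne',
        Complex.ofReal_one, one_smul]
      abel
    have h₁ : x₀ + z' - w₁ ∈ I := hI.sub_mem (hI.add_mem hx₀ hz'I) hw₁I
    have h₂ : x₀ - w₂ ∈ I := hI.sub_mem hx₀ hw₂I
    rw [hsplit, hqI.smul_ofReal hc.le (hI.sub_mem h₁ h₂)]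
    calc c * qI ((x₀ + z' - w₁) - (x₀ - w₂))
        ≤ c * (CI * (qI (x₀ + z' - w₁) + qI (x₀ - w₂))) := by
          gcongr
          exact hqI.sub_le hI h₁ h₂
      _ < c * (CI * (ρ / (2 * CI * c) + ρ / (2 * CI * c))) := by gcongr
      _ = ρ := by field_simp; ring

/-- Successive approximation: `z = Σ wᵢ` with `qI wᵢ` and `qJ (a wᵢ)` decaying like `(2CJ)⁻ⁱ`,
so `a z = Σ a wᵢ` converges in `J`; the limit is identified with `a z` in operator norm. -/
theorem quasiNorm_mul_le_of_forall_mem_qClosure (hI : IsOpIdeal I)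
    (hqI : IsSymmetricQuasiNorm I qI CI) (hJ : IsOpIdeal J) (hqJ : IsSymmetricQuasiNorm J qJ CJ)
    (hcJ : QCompleteOn J qJ) (ha : a ∈ dualIdeal J I) {r K : ℝ}
    (happrox : ∀ c > 0, ∀ z ∈ I, qI z < c * r → z ∈ qClosure qI {w ∈ I | qJ (a * w) ≤ c * K})
    {z : H →L[ℂ] H} (hz : z ∈ I) (hzr : qI z < r) : qJ (a * z) ≤ 2 * CJ ^ 2 * K := by
  have hCJ : 1 ≤ CJ := hqJ.one_le
  set θ : ℝ := (2 * CJ)⁻¹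
  have hθ0 : 0 < θ := by positivity
  have hCθ : CJ * θ ≤ 1 / 2 := by
    simp only [θ]
    field_simp
    norm_num
  have hθ1 : θ < 1 := by nlinarith
  have hstep : ∀ (i : ℕ), ∀ u ∈ I, qI u < θ ^ i * r →
      ∃ w, (w ∈ I ∧ qJ (a * w) ≤ θ ^ i * K) ∧ qI (u - w) < θ ^ (i + 1) * r := by
    intro i u hu hur
    have hr : 0 < r := by nlinarith [hqI.nonneg u hu, pow_pos hθ0 i]
    exact happrox (θ ^ i) (by positivity) u hu hur _ (by positivity)
  choose! w hw hwu using hstep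
  let u : ℕ → H →L[ℂ] H := fun n => Nat.rec z (fun i ui => ui - w i ui) n
  have hu : ∀ n, u n ∈ I ∧ qI (u n) < θ ^ n * r := by
    intro n
    induction n with
    | zero => exact ⟨hz, by simpa [u] using hzr⟩
    | succ n ih => exact ⟨hI.sub_mem ih.1 (hw n _ ih.1 ih.2).1, hwu n _ ih.1 ih.2⟩
  have hpartial : ∀ n, a * (z - u n) ∈ J := fun n => ha _ (hI.sub_mem hz (hu n).1)
  have hincr : ∀ n, qJ (a * (z - u (n + 1)) - a * (z - u n)) ≤ θ ^ n * K := by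
    intro n
    have hdiff : a * (z - u (n + 1)) - a * (z - u n) = a * w n (u n) := by
      simp only [u, mul_sub]
      abel
    rw [hdiff]
    exact (hw n _ (hu n).1 (hu n).2).2
  obtain ⟨l, hlJ, hl, hlz⟩ := hcJ.exists_tendsto_of_succ_sub_le hqJ hJ hpartial hθ0.le hCθ
    (r := fun n => θ ^ n * K) (fun n => (by ring : θ ^ (n + 1) * K = θ * (θ ^ n * K)).le) hincr
  have hu0 : Tendsto u atTop (𝓝 0) := by
    refine squeeze_zero_norm (fun n => (hqI.norm_le hI (hu n).1).trans (hu n).2.le) ?_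
    simpa using (tendsto_pow_atTop_nhds_zero_of_lt_one hθ0.le hθ1).mul_const r
  have hlim : Tendsto (fun n => a * (z - u n)) atTop (𝓝 (a * z)) := by
    simpa using (tendsto_const_nhds.sub hu0).const_mul a
  obtain rfl : l = a * z :=
    tendsto_nhds_unique (hqJ.tendsto_of_tendsto_quasiNorm_sub hJ hpartial hlJ hl) hlim
  simpa [u] using hlz 0

theorem quasiNorm_mul_le_of_forall_le_one (hI : IsOpIdeal I) (hqI : IsSymmetricQuasiNorm I qI CI)
    (hqJ : IsSymmetricQuasiNorm J qJ CJ) (ha : a ∈ dualIdeal J I) {M : ℝ}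
    (hM : ∀ x ∈ I, qI x ≤ 1 → qJ (a * x) ≤ M) {x : H →L[ℂ] H} (hx : x ∈ I) :
    qJ (a * x) ≤ M * qI x := by
  rcases (hqI.nonneg x hx).eq_or_lt with h0 | hpos
  · obtain rfl : x = 0 := (hqI.eq_zero x hx).1 h0.symm
    rw [(hqJ.eq_zero _ (ha 0 hx)).2 (mul_zero a), ← h0, mul_zero]
  have hx1 := hM _ (hI.smul_mem (((qI x)⁻¹ : ℝ) : ℂ) hx) (by
    rw [hqI.smul_ofReal (inv_nonneg.2 hpos.le) hx, inv_mul_cancel₀ hpos.ne'])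
  rw [mul_smul_comm, hqJ.smul_ofReal (inv_nonneg.2 hpos.le) (ha x hx), inv_mul_le_iff₀ hpos,
    mul_comm] at hx1
  exact hx1

theorem exists_quasiNorm_mul_le_of_mem_dualIdeal (hI : IsSymQBIdeal I qI CI)
    (hJ : IsSymQBIdeal J qJ CJ) (ha : a ∈ dualIdeal J I) :
    ∃ M : ℝ, 0 ≤ M ∧ ∀ x ∈ I, qJ (a * x) ≤ M * qI x := by
  have hCJ : 0 ≤ CJ := zero_le_one.trans hJ.snorm.one_le
  obtain ⟨k, x₀, hx₀, r, hr, hball⟩ := hI.complete.exists_ball_subset_qClosure hI.snorm hI.ideal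
    (fun k : ℕ => {w ∈ I | qJ (a * w) ≤ k}) fun x hx => ⟨⌈qJ (a * x)⌉₊, hx, Nat.le_ceil _⟩
  set M₀ : ℝ := 2 * CJ ^ 2 * (2 * CJ * k)
  have hsmall : ∀ z ∈ I, qI z < r → qJ (a * z) ≤ M₀ := fun z hz hzr =>
    quasiNorm_mul_le_of_forall_mem_qClosure hI.ideal hI.snorm hJ.ideal hJ.snorm hJ.complete ha
      (fun c hc z hz hzr => mem_qClosure_of_ball_subset_qClosure hI.ideal hI.snorm hJ.ideal
        hJ.snorm ha hx₀ hball hc hz hzr) hz hzr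
  refine ⟨2 / r * M₀, by positivity, fun x hx =>
    quasiNorm_mul_le_of_forall_le_one hI.ideal hI.snorm hJ.snorm ha (fun y hy hy1 => ?_) hx⟩
  have hy' := hsmall _ (hI.ideal.smul_mem ((r / 2 : ℝ) : ℂ) hy) (by
    rw [hI.snorm.smul_ofReal (by positivity) hy]
    nlinarith)
  rw [mul_smul_comm, hJ.snorm.smul_ofReal (by positivity) (ha y hy)] at hy'
  rw [div_mul_eq_mul_div, le_div_iff₀ hr]
  linarith

end Multiplier

section DualQuasiNorm

variable {I J : Set (H →L[ℂ] H)} {qI qJ : (H →L[ℂ] H) → ℝ} {CI CJ : ℝ} {a : H →L[ℂ] H}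

theorem isOpIdeal_dualIdeal (hI : IsOpIdeal I) (hJ : IsOpIdeal J) :
    IsOpIdeal (dualIdeal J I) where
  zero_mem x _ := by simpa using hJ.zero_mem
  add_mem ha hb x hx := by simpa [add_mul] using hJ.add_mem (ha x hx) (hb x hx)
  smul_mem α _ ha x hx := by simpa [smul_mul_assoc] using hJ.smul_mem α (ha x hx)
  mul_mem_left b _ ha x hx := by simpa [mul_assoc] using hJ.mul_mem_left b (ha x hx)
  mul_mem_right b _ ha x hx := by simpa [mul_assoc] using ha _ (hI.mul_mem_left b hx)

theorem le_dualQN (hI : IsSymQBIdeal I qI CI) (hJ : IsSymQBIdeal J qJ CJ)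
    (ha : a ∈ dualIdeal J I) {x : H →L[ℂ] H} (hx : x ∈ I) (hx1 : qI x ≤ 1) :
    qJ (a * x) ≤ dualQN J I qJ qI a := by
  obtain ⟨M, hM0, hM⟩ := exists_quasiNorm_mul_le_of_mem_dualIdeal hI hJ ha
  refine le_csSup ⟨M, ?_⟩ ⟨x, hx, hx1, rfl⟩
  rintro _ ⟨y, hy, hy1, rfl⟩
  exact (hM y hy).trans (mul_le_of_le_one_right hM0 hy1)

theorem dualQN_le (hI : IsOpIdeal I) (hqI : IsSymmetricQuasiNorm I qI CI) {B : ℝ}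
    (hB : ∀ x ∈ I, qI x ≤ 1 → qJ (a * x) ≤ B) : dualQN J I qJ qI a ≤ B := by
  refine csSup_le ⟨_, 0, hI.zero_mem, by simp [hqI.map_zero hI], rfl⟩ ?_
  rintro _ ⟨x, hx, hx1, rfl⟩
  exact hB x hx hx1

theorem dualQN_nonneg (hI : IsSymQBIdeal I qI CI) (hJ : IsSymQBIdeal J qJ CJ)
    (ha : a ∈ dualIdeal J I) : 0 ≤ dualQN J I qJ qI a := by
  simpa [hJ.snorm.map_zero hJ.ideal] using
    le_dualQN hI hJ ha hI.ideal.zero_mem (by simp [hI.snorm.map_zero hI.ideal])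

theorem mul_le_dualQN_mul (hI : IsSymQBIdeal I qI CI) (hJ : IsSymQBIdeal J qJ CJ)
    (ha : a ∈ dualIdeal J I) {x : H →L[ℂ] H} (hx : x ∈ I) :
    qJ (a * x) ≤ dualQN J I qJ qI a * qI x :=
  quasiNorm_mul_le_of_forall_le_one hI.ideal hI.snorm hJ.snorm ha
    (fun _ hy hy1 => le_dualQN hI hJ ha hy hy1) hx

theorem norm_le_dualQN (hI : IsSymQBIdeal I qI CI) (hJ : IsSymQBIdeal J qJ CJ)
    {x₁ : H →L[ℂ] H} (hx₁ : x₁ ∈ I) (hx₁0 : x₁ ≠ 0) (ha : a ∈ dualIdeal J I) :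
    ‖a‖ ≤ dualQN J I qJ qI a := by
  refine opNorm_le_of_unit_norm (dualQN_nonneg hI hJ ha) fun v hv => ?_
  set p := rankOne ℂ v v
  have hpI : p ∈ I := hI.ideal.rankOne_mem hx₁ hx₁0 v v
  have hp1 : qI p = 1 := hI.snorm.rank_one p hpI (isRankOneProjection_rankOne_self hv)
  calc ‖a v‖ = ‖(a * p) v‖ := by simp [p, inner_self_eq_norm_sq_to_K, hv]
    _ ≤ ‖a * p‖ := by simpa [hv] using le_opNorm (a * p) v
    _ ≤ qJ (a * p) := hJ.snorm.norm_le hJ.ideal (ha p hpI)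
    _ ≤ dualQN J I qJ qI a := le_dualQN hI hJ ha hpI hp1.le

theorem dualQN_smul_le (hI : IsSymQBIdeal I qI CI) (hJ : IsSymQBIdeal J qJ CJ)
    (ha : a ∈ dualIdeal J I) (α : ℂ) : dualQN J I qJ qI (α • a) ≤ ‖α‖ * dualQN J I qJ qI a :=
  dualQN_le hI.ideal hI.snorm fun x hx hx1 => by
    rw [smul_mul_assoc, hJ.snorm.smul α _ (ha x hx)]
    exact mul_le_mul_of_nonneg_left (le_dualQN hI hJ ha hx hx1) (norm_nonneg α)

variable {x₁ : H →L[ℂ] H}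

theorem isSymmetricQuasiNorm_dualQN (hI : IsSymQBIdeal I qI CI) (hJ : IsSymQBIdeal J qJ CJ)
    (hx₁ : x₁ ∈ I) (hx₁0 : x₁ ≠ 0) :
    IsSymmetricQuasiNorm (dualIdeal J I) (dualQN J I qJ qI) CJ where
  one_le := hJ.snorm.one_le
  nonneg _ ha := dualQN_nonneg hI hJ ha
  eq_zero a ha := by
    refine ⟨fun h => norm_le_zero_iff.1 (h ▸ norm_le_dualQN hI hJ hx₁ hx₁0 ha), ?_⟩
    rintro rfl
    exact le_antisymm (by simpa using dualQN_smul_le hI hJ ha 0) (dualQN_nonneg hI hJ ha)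
  smul α a ha := by
    refine le_antisymm (dualQN_smul_le hI hJ ha α) ?_
    rcases eq_or_ne α 0 with rfl | hα
    · simpa using dualQN_nonneg hI hJ (isOpIdeal_dualIdeal hI.ideal hJ.ideal |>.smul_mem 0 ha)
    have h := dualQN_smul_le hI hJ ((isOpIdeal_dualIdeal hI.ideal hJ.ideal).smul_mem α ha) α⁻¹
    rw [smul_smul, inv_mul_cancel₀ hα, one_smul, norm_inv] at h
    rwa [le_inv_mul_iff₀ (norm_pos_iff.2 hα)] at h
  add_le a ha b hb := dualQN_le hI.ideal hI.snorm fun x hx hx1 => by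
    rw [add_mul]
    refine (hJ.snorm.add_le _ (ha x hx) _ (hb x hx)).trans ?_
    gcongr
    · exact zero_le_one.trans hJ.snorm.one_le
    · exact le_dualQN hI hJ ha hx hx1
    · exact le_dualQN hI hJ hb hx hx1
  sym u v a ha := dualQN_le hI.ideal hI.snorm fun x hx hx1 => by
    have hvx : v * x ∈ I := hI.ideal.mul_mem_left v hx
    calc qJ (u * a * v * x) = qJ (u * (a * (v * x))) := by simp only [mul_assoc]
      _ ≤ ‖u‖ * qJ (a * (v * x)) := hJ.snorm.mul_le_left u (ha _ hvx)
      _ ≤ ‖u‖ * (dualQN J I qJ qI a * qI (v * x)) := by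
          gcongr
          exact mul_le_dualQN_mul hI hJ ha hvx
      _ ≤ ‖u‖ * (dualQN J I qJ qI a * ‖v‖) := by
          gcongr
          · exact dualQN_nonneg hI hJ ha
          · exact (hI.snorm.mul_le_left v hx).trans (mul_le_of_le_one_right (norm_nonneg v) hx1)
      _ = ‖u‖ * dualQN J I qJ qI a * ‖v‖ := by ring
  rank_one p hp hproj := by
    have hpI : p ∈ I := hI.ideal.mem_of_finrank_range_eq_one hx₁ hx₁0 hproj.2.2
    have hpJ : p ∈ J := by simpa [hproj.1] using hp p hpI
    have hqJp : qJ p = 1 := hJ.snorm.rank_one p hpJ hproj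
    refine le_antisymm (dualQN_le hI.ideal hI.snorm fun x hx hx1 => ?_) ?_
    · calc qJ (p * x) ≤ qJ p * ‖x‖ := hJ.snorm.mul_le_right hpJ x
        _ ≤ 1 := by rw [hqJp, one_mul]; exact (hI.snorm.norm_le hI.ideal hx).trans hx1
    · simpa [hproj.1, hqJp] using le_dualQN hI hJ hp hpI (hI.snorm.rank_one p hpI hproj).le

theorem mem_and_tendsto_of_qCauchy_dualQN (hI : IsSymQBIdeal I qI CI)
    (hJ : IsSymQBIdeal J qJ CJ) {a : ℕ → H →L[ℂ] H} {b : H →L[ℂ] H} (ha : ∀ n, a n ∈ dualIdeal J I)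
    (hcauchy : QCauchy (dualQN J I qJ qI) a) (hb : Tendsto a atTop (𝓝 b)) {x : H →L[ℂ] H}
    (hx : x ∈ I) : b * x ∈ J ∧ Tendsto (fun n => qJ (a n * x - b * x)) atTop (𝓝 0) := by
  have hD := isOpIdeal_dualIdeal hI.ideal hJ.ideal
  refine hJ.complete.mem_of_tendsto hJ.snorm hJ.ideal (fun n => ha n x hx) ?_ (hb.mul_const x)
  intro ε hε
  have hx0 := hI.snorm.nonneg x hx
  obtain ⟨N, hN⟩ := hcauchy (ε / (qI x + 1)) (by positivity)
  refine ⟨N, fun m n hm hn => ?_⟩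
  calc qJ (a m * x - a n * x) = qJ ((a m - a n) * x) := by rw [sub_mul]
    _ ≤ dualQN J I qJ qI (a m - a n) * qI x :=
        mul_le_dualQN_mul hI hJ (hD.sub_mem (ha m) (ha n)) hx
    _ ≤ ε / (qI x + 1) * qI x := by gcongr; exact (hN m n hm hn).le
    _ < ε := by
        rw [div_mul_eq_mul_div, div_lt_iff₀ (by positivity)]
        nlinarith

theorem dualQN_sub_le_of_tendsto (hI : IsSymQBIdeal I qI CI) (hJ : IsSymQBIdeal J qJ CJ)
    {a : ℕ → H →L[ℂ] H} {b : H →L[ℂ] H} (ha : ∀ n, a n ∈ dualIdeal J I) (hbD : b ∈ dualIdeal J I)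
    (hpoint : ∀ x ∈ I, Tendsto (fun n => qJ (a n * x - b * x)) atTop (𝓝 0)) {ε : ℝ} {N : ℕ}
    (hN : ∀ m n, N ≤ m → N ≤ n → dualQN J I qJ qI (a m - a n) < ε) {n : ℕ} (hn : N ≤ n) :
    dualQN J I qJ qI (a n - b) ≤ CJ * ε := by
  have hD := isOpIdeal_dualIdeal hI.ideal hJ.ideal
  refine dualQN_le hI.ideal hI.snorm fun x hx hx1 => ?_
  have hbound : ∀ m ≥ N, qJ ((a n - b) * x) ≤ CJ * (ε + qJ (a m * x - b * x)) := by
    intro m hm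
    have hnm := hD.sub_mem (ha n) (ha m)
    calc qJ ((a n - b) * x) = qJ ((a n - a m) * x + (a m * x - b * x)) := by
          simp only [sub_mul, sub_add_sub_cancel]
      _ ≤ CJ * (qJ ((a n - a m) * x) + qJ (a m * x - b * x)) :=
          hJ.snorm.add_le _ (hnm x hx) _ (hJ.ideal.sub_mem (ha m x hx) (hbD x hx))
      _ ≤ CJ * (ε + qJ (a m * x - b * x)) := by
          gcongr
          · exact zero_le_one.trans hJ.snorm.one_le
          calc qJ ((a n - a m) * x) ≤ dualQN J I qJ qI (a n - a m) * qI x :=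
                mul_le_dualQN_mul hI hJ hnm hx
            _ ≤ ε := by
                nlinarith [hN n m hn hm, hI.snorm.nonneg x hx, dualQN_nonneg hI hJ hnm]
  simpa using ge_of_tendsto ((tendsto_const_nhds.add (hpoint x hx)).const_mul CJ)
    (eventually_atTop.2 ⟨N, hbound⟩)

/-- A `dualQN`-Cauchy sequence `aₙ` converges in operator norm to some `b`; each `aₙ x` is then
`qJ`-Cauchy with limit `b x ∈ J`, and the convergence is uniform on the unit ball of `I`. -/
theorem qCompleteOn_dualQN (hI : IsSymQBIdeal I qI CI) (hJ : IsSymQBIdeal J qJ CJ)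
    (hx₁ : x₁ ∈ I) (hx₁0 : x₁ ≠ 0) : QCompleteOn (dualIdeal J I) (dualQN J I qJ qI) := by
  intro a ha hcauchy
  have hD := isOpIdeal_dualIdeal hI.ideal hJ.ideal
  have hCJ : 0 < CJ := zero_lt_one.trans_le hJ.snorm.one_le
  have hnorm : CauchySeq a := Metric.cauchySeq_iff.2 fun ε hε =>
    (hcauchy ε hε).imp fun N hN m hm n hn => by
      rw [dist_eq_norm]
      exact (norm_le_dualQN hI hJ hx₁ hx₁0 (hD.sub_mem (ha m) (ha n))).trans_lt (hN m n hm hn)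
  obtain ⟨b, hb⟩ := cauchySeq_tendsto_of_complete hnorm
  have hpoint x hx := mem_and_tendsto_of_qCauchy_dualQN hI hJ ha hcauchy hb (x := x) hx
  have hbD : b ∈ dualIdeal J I := fun x hx => (hpoint x hx).1
  refine ⟨b, hbD, Metric.tendsto_atTop.2 fun ε hε => ?_⟩
  obtain ⟨N, hN⟩ := hcauchy (ε / (2 * CJ)) (by positivity)
  refine ⟨N, fun n hn => ?_⟩
  rw [Real.dist_eq, sub_zero, abs_of_nonneg (dualQN_nonneg hI hJ (hD.sub_mem (ha n) hbD))]
  calc dualQN J I qJ qI (a n - b) ≤ CJ * (ε / (2 * CJ)) :=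
        dualQN_sub_le_of_tendsto hI hJ ha hbD (fun x hx => (hpoint x hx).2) hN hn
    _ = ε / 2 := by field_simp
    _ < ε := half_lt_self hε

end DualQuasiNorm

/-- For symmetric quasi-Banach ideals `I, J` of compact operators
with `I ⊄ J`: each multiplication map `T_a(x) = ax` (`a ∈ J:I`) is continuous from
`I` to `J`; `‖a‖_{J:I}` is a complete symmetric quasi-norm on the two-sided ideal
`J:I` with modulus of concavity at most that of `qJ`; and
`qJ (a x) ≤ ‖a‖_{J:I} qI x` for all `a ∈ J:I`, `x ∈ I`. -/
theorem statement17 (I J : Set (H →L[ℂ] H)) (qI qJ : (H →L[ℂ] H) → ℝ) (CI CJ : ℝ)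
    (hI : IsSymQBIdeal I qI CI) (hJ : IsSymQBIdeal J qJ CJ) (hnsub : ¬ I ⊆ J) :
    (∀ a ∈ dualIdeal J I, ∃ M : ℝ, 0 ≤ M ∧ ∀ x ∈ I, qJ (a * x) ≤ M * qI x) ∧
    IsOpIdeal (dualIdeal J I) ∧
    IsSymmetricQuasiNorm (dualIdeal J I) (dualQN J I qJ qI) CJ ∧
    QCompleteOn (dualIdeal J I) (dualQN J I qJ qI) ∧
    (∀ a ∈ dualIdeal J I, ∀ x ∈ I, qJ (a * x) ≤ dualQN J I qJ qI a * qI x) := by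
  obtain ⟨x₁, hx₁I, hx₁J⟩ := Set.not_subset.1 hnsub
  have hx₁0 : x₁ ≠ 0 := fun h => hx₁J (h ▸ hJ.ideal.zero_mem)
  exact ⟨fun a ha => exists_quasiNorm_mul_le_of_mem_dualIdeal hI hJ ha,
    isOpIdeal_dualIdeal hI.ideal hJ.ideal,
    isSymmetricQuasiNorm_dualQN hI hJ hx₁I hx₁0,
    qCompleteOn_dualQN hI hJ hx₁I hx₁0,
    fun a ha x hx => mul_le_dualQN_mul hI hJ ha hx⟩

end
end
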